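/- arXiv:2110.00231 — 5 statements merged into one kernel-verified Lean document; each statement's English description precedes it below -/
import Mathlib

section
/- For any nonnegative integer r, ∑_{α₁+α₂=r+3} 2^{α₂} · ζ(α₁, α₂+1) = ((r+5)/2) · ζ(r+4), where the sum is over pairs of positive integers (α₁, α₂) with α₁+α₂ = r+3. -/
open Filter

/-- Limit of partial sums (handles conditionally convergent series). -/
noncomputable def plim (f : ℕ → ℝ) : ℝ := limUnder atTop f

/-- Riemann zeta value `ζ(s) = ∑_{k ≥ 1} 1/k^s`. -/
noncomputable def zetaV (s : ℕ) : ℝ :=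
  plim fun N => ∑ k ∈ Finset.Ico 1 (N + 1), 1 / (k : ℝ) ^ s

/-- Alternating zeta value `ζ̄(s) = ∑_{k ≥ 1} (-1)^k/k^s`. -/
noncomputable def zetaBar (s : ℕ) : ℝ :=
  plim fun N => ∑ k ∈ Finset.Ico 1 (N + 1), (-1 : ℝ) ^ k / (k : ℝ) ^ s

/-- Double zeta value `ζ(a,b) = ∑_{1 ≤ k₁ < k₂} 1/(k₁^a k₂^b)`. -/
noncomputable def zeta2 (a b : ℕ) : ℝ :=
  plim fun N => ∑ k₂ ∈ Finset.Ico 1 (N + 1), ∑ k₁ ∈ Finset.Ico 1 k₂,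
    1 / ((k₁ : ℝ) ^ a * (k₂ : ℝ) ^ b)

/-- `ζ(a, b̄) = ∑_{1 ≤ k₁ < k₂} (-1)^{k₂}/(k₁^a k₂^b)` (sign on the outer index). -/
noncomputable def zeta2barO (a b : ℕ) : ℝ :=
  plim fun N => ∑ k₂ ∈ Finset.Ico 1 (N + 1), ∑ k₁ ∈ Finset.Ico 1 k₂,
    (-1 : ℝ) ^ k₂ / ((k₁ : ℝ) ^ a * (k₂ : ℝ) ^ b)

/-- `ζ(ā, b) = ∑_{1 ≤ k₁ < k₂} (-1)^{k₁}/(k₁^a k₂^b)` (sign on the inner index). -/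
noncomputable def zeta2barI (a b : ℕ) : ℝ :=
  plim fun N => ∑ k₂ ∈ Finset.Ico 1 (N + 1), ∑ k₁ ∈ Finset.Ico 1 k₂,
    (-1 : ℝ) ^ k₁ / ((k₁ : ℝ) ^ a * (k₂ : ℝ) ^ b)

/-- `ζ(ā, b̄) = ∑_{1 ≤ k₁ < k₂} (-1)^{k₁+k₂}/(k₁^a k₂^b)`. -/
noncomputable def zeta2barB (a b : ℕ) : ℝ :=
  plim fun N => ∑ k₂ ∈ Finset.Ico 1 (N + 1), ∑ k₁ ∈ Finset.Ico 1 k₂,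
    (-1 : ℝ) ^ (k₁ + k₂) / ((k₁ : ℝ) ^ a * (k₂ : ℝ) ^ b)

/-- Multiple zeta value `ζ(α₁,…,α_r)`. -/
noncomputable def mzv {r : ℕ} (α : Fin r → ℕ) : ℝ :=
  ∑' k : {f : Fin r → ℕ // StrictMono f ∧ ∀ i, 1 ≤ f i},
    ∏ i, 1 / ((k.1 i : ℝ) ^ α i)

/-- Multiple zeta-star value `ζ⋆(α₁,…,α_r)`. -/
noncomputable def mzvStar {r : ℕ} (α : Fin r → ℕ) : ℝ :=
  ∑' k : {f : Fin r → ℕ // Monotone f ∧ ∀ i, 1 ≤ f i},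
    ∏ i, 1 / ((k.1 i : ℝ) ^ α i)

/-- Height-one MZV `ζ({1}^a, b+2)`. -/
noncomputable def heightOne (a b : ℕ) : ℝ :=
  mzv (Fin.snoc (fun _ : Fin a => 1) (b + 2))

/-- Height-one zeta-star value `ζ⋆({1}^a, b+2)`. -/
noncomputable def heightOneStar (a b : ℕ) : ℝ :=
  mzvStar (Fin.snoc (fun _ : Fin a => 1) (b + 2))


/-!
Summing `1 / (x^p y^q)` over pairs of positive integers gives `ζ(p) ζ(q)`, and this double sum
can be rearranged in two ways. Splitting the pairs into `x < y`, `x = y`, `x > y` gives the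
stuffle relation `ζ(p) ζ(q) = ζ(p, q) + ζ(q, p) + ζ(p + q)`. Iterating
`1/(xy) = (1/x + 1/y) / (x + y)` instead gives
`∑_{p+q=w} 1 / (x^p y^q) = ∑_{a+b=w} 2^(b-1) (1/x^a + 1/y^a) / (x + y)^b`, whose right side sums
to twice the weighted sum of the theorem. The divergent terms (`p = 1` or `q = 1` on the left,
`b = 1` on the right) combine into `T = ∑ 1 / (x^(w-2) y (x + y))` and its mirror image, and
telescoping in `y` gives `T = ζ(w) + ζ(1, w - 1)`. The same partial fractions give the sum formula
`∑_{a+b=w} ζ(a, b) = T - ζ(1, w - 1) = ζ(w)`, and with it the stuffle relations summed over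
`p + q = w`, `p, q ≥ 2`, evaluate what is left.
-/

open Finset in
theorem HasSum.sum_antidiagonal {α : Type*} [AddCommMonoid α] [TopologicalSpace α]
    [ContinuousAdd α] [RegularSpace α] {f : ℕ × ℕ → α} {a : α} (h : HasSum f a) :
    HasSum (fun n => ∑ p ∈ antidiagonal n, f p) a :=
  (HasAntidiagonal.sigmaAntidiagonalEquivProd.hasSum_iff.mpr h).sigma
    fun n => (antidiagonal n).hasSum f

namespace OhnoZudilin

open Finset Filter Topology

theorem hasSum_sub_add_of_antitone {g : ℕ → ℝ} (hg : Antitone g)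
    (h0 : Tendsto g atTop (𝓝 0)) (m : ℕ) :
    HasSum (fun j => g j - g (j + m)) (∑ k ∈ range m, g k) := by
  rw [hasSum_iff_tendsto_nat_of_nonneg fun j => sub_nonneg.2 (hg (Nat.le_add_right j m))]
  have hpartial (N : ℕ) :
      ∑ j ∈ range N, (g j - g (j + m)) = ∑ k ∈ range m, (g k - g (N + k)) := by
    have h₁ := sum_range_add g N m
    have h₂ := sum_range_add g m N
    simp only [sum_sub_distrib, add_comm _ m] at h₁ h₂ ⊢
    linarith
  simp_rw [hpartial]
  simpa using tendsto_finsetSum (range m) fun k _ =>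
    tendsto_const_nhds.sub (h0.comp (tendsto_add_atTop_nat k))

theorem sum_Ico_sum_Ico_eq_sum_range_sum_antidiagonal {M : Type*} [AddCommMonoid M]
    (g : ℕ → ℕ → M) (N : ℕ) :
    ∑ k₂ ∈ Ico 1 (N + 1), ∑ k₁ ∈ Ico 1 k₂, g k₁ k₂ =
      ∑ n ∈ range (N - 1), ∑ p ∈ antidiagonal n, g (p.1 + 1) (p.1 + p.2 + 2) := by
  have inner (n : ℕ) : ∑ p ∈ antidiagonal n, g (p.1 + 1) (p.1 + p.2 + 2) =
      ∑ k₁ ∈ Ico 1 (n + 2), g k₁ (n + 2) := by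
    rw [sum_congr rfl fun p hp => by rw [mem_antidiagonal.mp hp],
      Nat.sum_antidiagonal_eq_sum_range_succ_mk, sum_Ico_eq_sum_range]
    simp [add_comm]
  cases N with
  | zero => simp
  | succ N =>
    rw [sum_Ico_eq_sum_range, Nat.add_sub_cancel, sum_range_succ']
    simp [inner, add_comm, add_left_comm]

theorem inv_mul_inv_mul_inv_add_le {x y : ℝ} (hx : 0 < x) (hy : 0 < y) :
    x⁻¹ * y⁻¹ * (x + y)⁻¹ ≤ (x ^ (3 / 2 : ℝ))⁻¹ * (y ^ (3 / 2 : ℝ))⁻¹ := by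
  have h32 (z : ℝ) (hz : 0 < z) : z ^ (3 / 2 : ℝ) = z * √z := by
    rw [Real.sqrt_eq_rpow, ← Real.rpow_one_add' hz.le (by norm_num)]
    norm_num
  have hsx := Real.sq_sqrt hx.le
  have hsy := Real.sq_sqrt hy.le
  have hgm : √x * √y ≤ x + y := by
    nlinarith [sq_nonneg (√x - √y), Real.sqrt_nonneg x, Real.sqrt_nonneg y]
  rw [h32 x hx, h32 y hy, ← mul_inv, ← mul_inv, ← mul_inv]
  apply inv_anti₀ (by positivity)
  calc x * √x * (y * √y) = x * y * (√x * √y) := by ring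
    _ ≤ x * y * (x + y) := by gcongr

/-- The lattice point `p = (i, j)` stands for `(x, y) = (i + 1, j + 1)`; these are `1/x`, `1/y`
and `1/(x + y)`. -/
noncomputable def invX (p : ℕ × ℕ) : ℝ := ((p.1 : ℝ) + 1)⁻¹

noncomputable def invY (p : ℕ × ℕ) : ℝ := ((p.2 : ℝ) + 1)⁻¹

noncomputable def invXY (p : ℕ × ℕ) : ℝ := ((p.1 : ℝ) + p.2 + 2)⁻¹

@[simp] theorem invX_swap (p : ℕ × ℕ) : invX p.swap = invY p := rfl

@[simp] theorem invY_swap (p : ℕ × ℕ) : invY p.swap = invX p := rfl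

@[simp] theorem invXY_swap (p : ℕ × ℕ) : invXY p.swap = invXY p := by
  simp [invXY, add_comm]

theorem invX_mul_invY (p : ℕ × ℕ) : invX p * invY p = invXY p * (invX p + invY p) := by
  simp only [invX, invY, invXY]
  field_simp
  ring

theorem invX_pos (p : ℕ × ℕ) : 0 < invX p := by unfold invX; positivity

theorem invY_pos (p : ℕ × ℕ) : 0 < invY p := by unfold invY; positivity

theorem invXY_pos (p : ℕ × ℕ) : 0 < invXY p := by unfold invXY; positivity

theorem invX_le_one (p : ℕ × ℕ) : invX p ≤ 1 :=
  inv_le_one_of_one_le₀ (le_add_of_nonneg_left p.1.cast_nonneg)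

theorem invY_le_one (p : ℕ × ℕ) : invY p ≤ 1 :=
  inv_le_one_of_one_le₀ (le_add_of_nonneg_left p.2.cast_nonneg)

theorem invXY_le_invY (p : ℕ × ℕ) : invXY p ≤ invY p :=
  inv_anti₀ (by positivity) (by linarith [(p.1.cast_nonneg : (0 : ℝ) ≤ p.1)])

theorem invXY_of_mem_antidiagonal {n : ℕ} {p : ℕ × ℕ} (hp : p ∈ antidiagonal n) :
    invXY p = ((n : ℝ) + 2)⁻¹ := by
  rw [invXY, ← mem_antidiagonal.mp hp]
  push_cast
  ring_nf

theorem hasSum_comp_swap {α β M : Type*} [AddCommMonoid M] [TopologicalSpace M]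
    {f : α × β → M} {a : M} (h : HasSum f a) : HasSum (fun p : β × α => f p.swap) a :=
  (Equiv.prodComm β α).hasSum_iff.mpr h

theorem summable_invX_mul_invY_mul_invXY : Summable fun p => invX p * invY p * invXY p := by
  set f : ℕ → ℝ := fun n => (((n : ℝ) + 1) ^ (3 / 2 : ℝ))⁻¹
  have hf : Summable f := by
    simpa [f] using (summable_nat_add_iff 1).mpr
      (Real.summable_nat_rpow_inv.mpr (by norm_num : (1 : ℝ) < 3 / 2))
  have hf0 (n : ℕ) : 0 ≤ f n := by positivity
  refine (hf.mul_of_nonneg hf hf0 hf0).of_nonneg_of_le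
    (fun p => by unfold invX invY invXY; positivity) fun p => ?_
  have := inv_mul_inv_mul_inv_add_le (x := (p.1 : ℝ) + 1) (y := (p.2 : ℝ) + 1)
    (by positivity) (by positivity)
  simp only [invX, invY, invXY, f]
  convert this using 3
  ring

theorem hasSum_zetaV {s : ℕ} (hs : 2 ≤ s) :
    HasSum (fun n : ℕ => ((n : ℝ) + 1)⁻¹ ^ s) (zetaV s) := by
  have hsum : Summable fun n : ℕ => ((n : ℝ) + 1)⁻¹ ^ s := by
    simpa [inv_pow] using (summable_nat_add_iff 1).mpr (Real.summable_nat_pow_inv.mpr hs)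
  convert hsum.hasSum
  refine Tendsto.limUnder_eq (hsum.hasSum.tendsto_sum_nat.congr fun N => ?_)
  rw [sum_Ico_eq_sum_range]
  simp [add_comm, inv_pow]

theorem hasSum_zeta2 {a b : ℕ} (ha : 1 ≤ a) (hb : 2 ≤ b) :
    HasSum (fun p => invX p ^ a * invXY p ^ b) (zeta2 a b) := by
  have hsum : Summable fun p => invX p ^ a * invXY p ^ b := by
    refine summable_invX_mul_invY_mul_invXY.of_nonneg_of_le
      (fun p => by unfold invX invXY; positivity) fun p => ?_
    have := invX_pos p
    have := invXY_pos p
    calc invX p ^ a * invXY p ^ b ≤ invX p * invXY p ^ 2 :=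
          mul_le_mul (pow_le_of_le_one (invX_pos p).le (invX_le_one p) (by omega))
            (pow_le_pow_of_le_one this.le ((invXY_le_invY p).trans (invY_le_one p)) hb)
            (by positivity) (invX_pos p).le
      _ ≤ invX p * (invY p * invXY p) := by
          rw [sq]
          gcongr
          exact invXY_le_invY p
      _ = invX p * invY p * invXY p := by ring
  convert hsum.hasSum
  refine Tendsto.limUnder_eq ((hsum.hasSum.sum_antidiagonal.tendsto_sum_nat.comp
    (tendsto_sub_atTop_nat 1)).congr fun N => ?_)
  rw [sum_Ico_sum_Ico_eq_sum_range_sum_antidiagonal]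
  simp [invX, invXY, inv_pow, add_assoc, mul_comm]

theorem hasSum_zetaV_mul_zetaV {a b : ℕ} (ha : 2 ≤ a) (hb : 2 ≤ b) :
    HasSum (fun p => invX p ^ a * invY p ^ b) (zetaV a * zetaV b) :=
  (hasSum_zetaV ha).mul (hasSum_zetaV hb) <|
    (hasSum_zetaV ha).summable.mul_of_nonneg (hasSum_zetaV hb).summable
      (fun _ => by positivity) fun _ => by positivity

def ltDiagGtEquiv : (ℕ × ℕ) ⊕ ℕ ⊕ (ℕ × ℕ) ≃ ℕ × ℕ where
  toFun := Sum.elim (fun q => (q.1, q.1 + q.2 + 1))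
    (Sum.elim (fun n => (n, n)) fun q => (q.1 + q.2 + 1, q.1))
  invFun p :=
    if p.1 < p.2 then .inl (p.1, p.2 - p.1 - 1)
    else if p.1 = p.2 then .inr (.inl p.1) else .inr (.inr (p.2, p.1 - p.2 - 1))
  left_inv := by
    rintro (⟨i, k⟩ | n | ⟨j, k⟩)
    · simp [show i + k + 1 - i - 1 = k by omega]
    · simp
    · simp [show ¬j + k + 1 < j by omega, show j + k + 1 ≠ j by omega,
        show j + k + 1 - j - 1 = k by omega]
  right_inv := by
    rintro ⟨i, j⟩
    dsimp only
    split_ifs <;> simp <;> omega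

theorem zetaV_mul_zetaV {a b : ℕ} (ha : 2 ≤ a) (hb : 2 ≤ b) :
    zetaV a * zetaV b = zeta2 a b + zeta2 b a + zetaV (a + b) := by
  have hprod := ltDiagGtEquiv.hasSum_iff.mpr (hasSum_zetaV_mul_zetaV ha hb)
  have hregions : HasSum ((fun p => invX p ^ a * invY p ^ b) ∘ ltDiagGtEquiv)
      (zeta2 a b + (zetaV (a + b) + zeta2 b a)) := by
    refine HasSum.sum ?_ (HasSum.sum ?_ ?_)
    · convert hasSum_zeta2 (a := a) (by omega) hb using 1
      funext q
      simp only [Function.comp_apply, ltDiagGtEquiv, Equiv.coe_fn_mk, Sum.elim_inl, invX, invY,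
        invXY]
      push_cast
      ring
    · convert hasSum_zetaV (s := a + b) (by omega) using 1
      funext n
      simp [ltDiagGtEquiv, invX, invY, pow_add]
    · convert hasSum_zeta2 (a := b) (by omega) ha using 1
      funext q
      simp only [Function.comp_apply, ltDiagGtEquiv, Equiv.coe_fn_mk, Sum.elim_inr, invX, invY,
        invXY]
      push_cast
      ring
  linarith [hprod.unique hregions]

theorem hasSum_invX_pow_mul_invY_mul_invXY (s : ℕ) :
    HasSum (fun p => invX p ^ (s + 1) * invY p * invXY p) (zetaV (s + 3) + zeta2 1 (s + 2)) := by
  set H : ℕ → ℝ := fun m => ∑ k ∈ range m, ((k : ℝ) + 1)⁻¹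
  have hsum : Summable fun p => invX p ^ (s + 1) * invY p * invXY p := by
    refine summable_invX_mul_invY_mul_invXY.of_nonneg_of_le
      (fun p => by unfold invX invY invXY; positivity) fun p => ?_
    have := invY_pos p
    have := invXY_pos p
    gcongr
    exact pow_le_of_le_one (invX_pos p).le (invX_le_one p) (by omega)
  -- `1 / (y (x + y)) = (1 / y - 1 / (x + y)) / x` telescopes in `y` to `H x / x`.
  have hrow (i : ℕ) : HasSum (fun j => invX (i, j) ^ (s + 1) * invY (i, j) * invXY (i, j))
      (((i : ℝ) + 1)⁻¹ ^ (s + 2) * H (i + 1)) := by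
    have htel := hasSum_sub_add_of_antitone (g := fun j : ℕ => ((j : ℝ) + 1)⁻¹)
      (fun j k hjk => inv_anti₀ (by positivity) (by gcongr))
      (tendsto_inv_atTop_zero.comp (tendsto_natCast_atTop_atTop.atTop_add tendsto_const_nhds))
      (i + 1)
    refine (htel.mul_left (((i : ℝ) + 1)⁻¹ ^ (s + 2))).congr_fun fun j => ?_
    have hXY : (((j + (i + 1) : ℕ) : ℝ) + 1)⁻¹ = invXY (i, j) := by
      simp only [invXY]
      push_cast
      ring_nf
    rw [hXY]
    change invX (i, j) ^ (s + 1) * invY (i, j) * invXY (i, j) =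
      invX (i, j) ^ (s + 2) * (invY (i, j) - invXY (i, j))
    linear_combination (-invX (i, j) ^ (s + 1)) * invX_mul_invY (i, j)
  have hrows := (hasSum_nat_add_iff' 1).mpr (hsum.hasSum.prod_fiberwise hrow)
  have hcols :
      HasSum (fun n : ℕ => ((n : ℝ) + 2)⁻¹ ^ (s + 2) * H (n + 1)) (zeta2 1 (s + 2)) := by
    refine (hasSum_zeta2 (a := 1) le_rfl (by omega)).sum_antidiagonal.congr_fun fun n => ?_
    rw [sum_congr rfl fun p hp => by rw [invXY_of_mem_antidiagonal hp, pow_one], ← sum_mul,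
      mul_comm, Nat.sum_antidiagonal_eq_sum_range_succ_mk]
    rfl
  have hdiag : HasSum (fun n : ℕ => ((n : ℝ) + 2)⁻¹ ^ (s + 3)) (zetaV (s + 3) - 1) := by
    simpa [add_assoc, one_add_one_eq_two] using
      (hasSum_nat_add_iff' 1).mpr (hasSum_zetaV (s := s + 3) (by omega))
  have hT := hrows.unique ((hcols.add hdiag).congr_fun fun n => ?_)
  · simp only [range_one, inv_pow, sum_singleton, CharP.cast_eq_zero, zero_add, one_pow, inv_one,
      mul_one, H] at hT
    rw [show zetaV (s + 3) + zeta2 1 (s + 2) = ∑' p, invX p ^ (s + 1) * invY p * invXY p by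
      linarith]
    exact hsum.hasSum
  · simp only [H, sum_range_succ]
    push_cast
    ring

section PartialFractions

variable {R : Type*} [CommRing R] {u v σ : R}

theorem sum_antidiagonal_pow_mul_pow (h : u * v = σ * (u + v)) (n : ℕ) :
    ∑ p ∈ antidiagonal n, u ^ (p.1 + 1) * v ^ (p.2 + 1) =
      ∑ p ∈ antidiagonal n,
        2 ^ p.2 * (u ^ (p.1 + 1) * σ ^ (p.2 + 1) + v ^ (p.1 + 1) * σ ^ (p.2 + 1)) := by
  induction n with
  | zero =>
    simp only [Nat.antidiagonal_zero, sum_singleton]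
    linear_combination h
  | succ n ih =>
    have hsplit : ∀ p ∈ antidiagonal (n + 1), u ^ (p.1 + 1) * v ^ (p.2 + 1) =
        σ * (u ^ (p.1 + 1) * v ^ p.2) + σ * (u ^ p.1 * v ^ (p.2 + 1)) := fun p _ => by
      linear_combination (u ^ p.1 * v ^ p.2) * h
    have hshift : ∑ p ∈ antidiagonal n,
        2 ^ (p.2 + 1) * (u ^ (p.1 + 1) * σ ^ (p.2 + 1 + 1) + v ^ (p.1 + 1) * σ ^ (p.2 + 1 + 1)) =
        2 * σ * ∑ p ∈ antidiagonal n,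
          2 ^ p.2 * (u ^ (p.1 + 1) * σ ^ (p.2 + 1) + v ^ (p.1 + 1) * σ ^ (p.2 + 1)) := by
      rw [mul_sum]
      exact sum_congr rfl fun p _ => by ring
    rw [sum_congr rfl hsplit, sum_add_distrib, ← mul_sum, ← mul_sum,
      Nat.sum_antidiagonal_succ' (f := fun p => u ^ (p.1 + 1) * v ^ p.2),
      Nat.sum_antidiagonal_succ (f := fun p => u ^ p.1 * v ^ (p.2 + 1)),
      Nat.sum_antidiagonal_succ', hshift, ← ih]
    ring

theorem sum_antidiagonal_two_pow_mul_eq_sum_pow_mul_pow (h : u * v = σ * (u + v)) (r : ℕ) :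
    ∑ p ∈ antidiagonal (r + 1),
        2 ^ (p.2 + 1) * (u ^ (p.1 + 1) * σ ^ (p.2 + 2) + v ^ (p.1 + 1) * σ ^ (p.2 + 2)) =
      ∑ p ∈ antidiagonal r, u ^ (p.1 + 2) * v ^ (p.2 + 2) +
        (u ^ (r + 2) * v * σ + v ^ (r + 2) * u * σ) := by
  have heuler := sum_antidiagonal_pow_mul_pow h (r + 2)
  rw [Nat.sum_antidiagonal_succ, Nat.sum_antidiagonal_succ', Nat.sum_antidiagonal_succ'] at heuler
  simp only [pow_zero, one_mul, zero_add, add_assoc, Nat.reduceAdd] at heuler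
  linear_combination -heuler + (u ^ (r + 2) + v ^ (r + 2)) * h

theorem sum_antidiagonal_pow_mul_pow_add_mul_pow (h : u * v = σ * (u + v)) (n : ℕ) :
    ∑ p ∈ antidiagonal n, u ^ (p.1 + 1) * σ ^ (p.2 + 2) + v * σ ^ (n + 2) =
      u ^ (n + 1) * v * σ := by
  induction n with
  | zero =>
    simp only [Nat.antidiagonal_zero, sum_singleton]
    linear_combination (-σ) * h
  | succ n ih =>
    have hshift : ∑ p ∈ antidiagonal n, u ^ (p.1 + 1) * σ ^ (p.2 + 1 + 2) =
        σ * ∑ p ∈ antidiagonal n, u ^ (p.1 + 1) * σ ^ (p.2 + 2) := by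
      rw [mul_sum]
      exact sum_congr rfl fun p _ => by ring
    rw [Nat.sum_antidiagonal_succ', hshift]
    linear_combination σ * ih - u ^ (n + 1) * σ * h

end PartialFractions

theorem sum_antidiagonal_zeta2 (n : ℕ) :
    ∑ p ∈ antidiagonal n, zeta2 (p.1 + 1) (p.2 + 2) = zetaV (n + 3) := by
  have hQ1 : HasSum (fun q => invY q * invXY q ^ (n + 2)) (zeta2 1 (n + 2)) := by
    simpa using hasSum_comp_swap (hasSum_zeta2 (a := 1) (b := n + 2) le_rfl (by omega))
  have hparts := (hasSum_sum fun p (_ : p ∈ antidiagonal n) =>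
    hasSum_zeta2 (a := p.1 + 1) (b := p.2 + 2) (by omega) (by omega)).add hQ1
  rw [funext fun q => sum_antidiagonal_pow_mul_pow_add_mul_pow (invX_mul_invY q) n] at hparts
  linarith [hparts.unique (hasSum_invX_pow_mul_invY_mul_invXY n)]

theorem two_mul_sum_antidiagonal_two_pow_mul_zeta2 (r : ℕ) :
    2 * ∑ p ∈ antidiagonal (r + 1), 2 ^ (p.2 + 1) * zeta2 (p.1 + 1) (p.2 + 2) =
      ∑ p ∈ antidiagonal r, zetaV (p.1 + 2) * zetaV (p.2 + 2) +
        2 * (zetaV (r + 4) + zeta2 1 (r + 3)) := by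
  have hQ (p : ℕ × ℕ) : HasSum (fun q => invX q ^ (p.1 + 1) * invXY q ^ (p.2 + 2))
      (zeta2 (p.1 + 1) (p.2 + 2)) := hasSum_zeta2 (by omega) (by omega)
  have hQswap (p : ℕ × ℕ) : HasSum (fun q => invY q ^ (p.1 + 1) * invXY q ^ (p.2 + 2))
      (zeta2 (p.1 + 1) (p.2 + 2)) := by simpa using hasSum_comp_swap (hQ p)
  have hT := hasSum_invX_pow_mul_invY_mul_invXY (r + 1)
  have hTswap : HasSum (fun q => invY q ^ (r + 2) * invX q * invXY q)
      (zetaV (r + 4) + zeta2 1 (r + 3)) := by simpa using hasSum_comp_swap hT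
  have hlhs := hasSum_sum fun p (_ : p ∈ antidiagonal (r + 1)) =>
    ((hQ p).add (hQswap p)).mul_left (2 ^ (p.2 + 1))
  have hrhs := (hasSum_sum fun p (_ : p ∈ antidiagonal r) =>
    hasSum_zetaV_mul_zetaV (a := p.1 + 2) (b := p.2 + 2) (by omega) (by omega)).add
    (hT.add hTswap)
  rw [funext fun q => sum_antidiagonal_two_pow_mul_eq_sum_pow_mul_pow (invX_mul_invY q) r]
    at hlhs
  have hdouble : ∑ p ∈ antidiagonal (r + 1),
      2 ^ (p.2 + 1) * (zeta2 (p.1 + 1) (p.2 + 2) + zeta2 (p.1 + 1) (p.2 + 2)) =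
      2 * ∑ p ∈ antidiagonal (r + 1), 2 ^ (p.2 + 1) * zeta2 (p.1 + 1) (p.2 + 2) := by
    rw [mul_sum]
    exact sum_congr rfl fun p _ => by ring
  linarith [hlhs.unique hrhs]

theorem sum_antidiagonal_zetaV_mul_zetaV (r : ℕ) :
    ∑ p ∈ antidiagonal r, zetaV (p.1 + 2) * zetaV (p.2 + 2) =
      (r + 3) * zetaV (r + 4) - 2 * zeta2 1 (r + 3) := by
  have hstuffle : ∀ p ∈ antidiagonal r, zetaV (p.1 + 2) * zetaV (p.2 + 2) =
      zeta2 (p.1 + 2) (p.2 + 2) + zeta2 (p.2 + 2) (p.1 + 2) + zetaV (r + 4) := fun p hp => by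
    rw [zetaV_mul_zetaV (by omega) (by omega), ← mem_antidiagonal.mp hp]
    ring_nf
  have hsum := sum_antidiagonal_zeta2 (r + 1)
  rw [Nat.sum_antidiagonal_succ] at hsum
  simp only [zero_add, add_assoc, Nat.reduceAdd] at hsum
  have hswap := Nat.sum_antidiagonal_swap (n := r) (f := fun p => zeta2 (p.1 + 2) (p.2 + 2))
  simp only [Prod.fst_swap, Prod.snd_swap] at hswap
  rw [sum_congr rfl hstuffle, sum_add_distrib, sum_add_distrib, hswap, sum_const,
    Nat.card_antidiagonal, nsmul_eq_mul]
  push_cast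
  linarith

theorem sum_antidiagonal_two_pow_mul_zeta2 (r : ℕ) :
    ∑ p ∈ antidiagonal (r + 1), 2 ^ (p.2 + 1) * zeta2 (p.1 + 1) (p.2 + 2) =
      ((r : ℝ) + 5) / 2 * zetaV (r + 4) := by
  have h := two_mul_sum_antidiagonal_two_pow_mul_zeta2 r
  rw [sum_antidiagonal_zetaV_mul_zetaV] at h
  linarith

end OhnoZudilin

theorem ohno_zudilin_weighted_sum (r : ℕ) :
    ∑ α₁ ∈ Finset.Ico 1 (r + 3), (2 : ℝ) ^ (r + 3 - α₁) * zeta2 α₁ (r + 3 - α₁ + 1) =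
      ((r : ℝ) + 5) / 2 * zetaV (r + 4) := by
  rw [← OhnoZudilin.sum_antidiagonal_two_pow_mul_zeta2,
    Finset.Nat.sum_antidiagonal_eq_sum_range_succ_mk, Finset.sum_Ico_eq_sum_range]
  refine Finset.sum_congr rfl fun k hk => ?_
  rw [Finset.mem_range] at hk
  rw [show r + 3 - (1 + k) = r + 1 - k + 1 by omega, add_comm 1 k]
end

section
/- For any nonnegative integer r, Euler's evaluation holds: ζ(1, r+3) = ((r+3)/2)·ζ(r+4) − (1/2)·∑_{ℓ=0}^{r} ζ(ℓ+2)·ζ(r−ℓ+2). -/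
open Filter

/-!
Euler's formula combines two relations among double zeta values. The stuffle relation
`ζ(a) ζ(b) = ζ(a, b) + ζ(b, a) + ζ(a + b)` comes from splitting `ℕ × ℕ` into `k₁ < k₂`,
`k₁ > k₂` and the diagonal; summed over `a + b = r + 4`, `a, b ≥ 2`, it expresses
`∑ ζ(ℓ + 2) ζ(r - ℓ + 2)` through the `ζ(a, b)` with `a, b ≥ 2`, and the sum formula
`∑_{a + b = s, a ≥ 1, b ≥ 2} ζ(a, b) = ζ(s)` trades those for `ζ(r + 4) - ζ(1, r + 3)`.

For the sum formula, at `k₁ < k₂` the geometric sum `∑ₐ k₁^(-a) k₂^(a-s)` plus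
`1 / ((k₂ - k₁) k₂^(s-1))` equals `(1 / (k₂ - k₁) - 1 / k₂) / k₁^(s-1)`. The added terms sum to
`ζ(1, s - 1)` (substitute `k₁ ↦ k₂ - k₁`), while summing the right side over `k₂` telescopes to
`H_{k₁} / k₁^(s-1)`, and `∑ₖ H_k / k^(s-1) = ζ(1, s - 1) + ζ(s)`.
-/

open Finset
open scoped Topology

lemma plim_eq_of_tendsto {f : ℕ → ℝ} {L : ℝ} (h : Tendsto f atTop (𝓝 L)) : plim f = L :=
  h.limUnder_eq

lemma sum_Ico_one_eq_sum_range {M : Type*} [AddCommMonoid M] {f : ℕ → M} (h0 : f 0 = 0)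
    (n : ℕ) : ∑ k ∈ Ico 1 n, f k = ∑ k ∈ range n, f k := by
  rcases n with _ | n
  · simp
  · rw [range_eq_Ico, sum_eq_sum_Ico_succ_bot n.succ_pos, h0, zero_add]

lemma hasSum_zetaV {s : ℕ} (hs : 2 ≤ s) :
    HasSum (fun k : ℕ => 1 / (k : ℝ) ^ s) (zetaV s) := by
  have hsum := Real.summable_one_div_nat_pow.2 hs
  convert hsum.hasSum
  refine plim_eq_of_tendsto
    ((hsum.hasSum.tendsto_sum_nat.comp (tendsto_add_atTop_nat 1)).congr fun N => ?_)
  exact (sum_Ico_one_eq_sum_range (by simp [zero_pow (by omega : s ≠ 0)]) _).symm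

/-- For `1 ≤ a` the terms with `k₁ = 0` vanish because `1 / 0 = 0`. -/
noncomputable def zeta2Term (a b : ℕ) (p : ℕ × ℕ) : ℝ :=
  if p.1 < p.2 then 1 / ((p.1 : ℝ) ^ a * (p.2 : ℝ) ^ b) else 0

lemma pow_two_mul_pow_two_le {k₁ k₂ a b : ℕ} (hk₁ : 1 ≤ k₁) (hk : k₁ ≤ k₂) (hb : 2 ≤ b)
    (hab : 4 ≤ a + b) : k₁ ^ 2 * k₂ ^ 2 ≤ k₁ ^ a * k₂ ^ b :=
  calc k₁ ^ 2 * k₂ ^ 2 ≤ k₁ ^ (a + (b - 2)) * k₂ ^ 2 := by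
        gcongr
        omega
    _ = k₁ ^ a * k₁ ^ (b - 2) * k₂ ^ 2 := by rw [pow_add]
    _ ≤ k₁ ^ a * k₂ ^ (b - 2) * k₂ ^ 2 := by gcongr
    _ = k₁ ^ a * k₂ ^ b := by rw [mul_assoc, ← pow_add, Nat.sub_add_cancel hb]

lemma summable_zeta2Term {a b : ℕ} (ha : 1 ≤ a) (hb : 2 ≤ b) (hab : 4 ≤ a + b) :
    Summable (zeta2Term a b) := by
  have hdom := (Real.summable_one_div_nat_pow.2 one_lt_two).mul_of_nonneg
    (Real.summable_one_div_nat_pow.2 one_lt_two) (fun _ => by positivity) (fun _ => by positivity)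
  refine hdom.of_nonneg_of_le (fun p => by unfold zeta2Term; split_ifs <;> positivity)
    fun ⟨k₁, k₂⟩ => ?_
  simp only [zeta2Term]
  split_ifs with hlt
  · rcases Nat.eq_zero_or_pos k₁ with rfl | hk₁
    · simp [zero_pow (by omega : a ≠ 0)]
    · rw [one_div_mul_one_div]
      have hk₂ : 0 < k₂ := hk₁.trans hlt
      refine one_div_le_one_div_of_le (by positivity) ?_
      exact_mod_cast pow_two_mul_pow_two_le hk₁ hlt.le hb hab
  · positivity

lemma HasSum.zeta2Term_sum_range {a b : ℕ} {L : ℝ} (h : HasSum (zeta2Term a b) L) :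
    HasSum (fun n : ℕ => ∑ k ∈ range n, 1 / ((k : ℝ) ^ a * (n : ℝ) ^ b)) L := by
  refine ((Equiv.prodComm ℕ ℕ).hasSum_iff.2 h).prod_fiberwise fun n => ?_
  have hfin : ∀ k ∉ range n, zeta2Term a b (k, n) = 0 := fun k hk => if_neg (by simpa using hk)
  have hsum : ∑ k ∈ range n, zeta2Term a b (k, n) =
      ∑ k ∈ range n, 1 / ((k : ℝ) ^ a * (n : ℝ) ^ b) :=
    sum_congr rfl fun k hk => if_pos (mem_range.1 hk)
  exact hsum ▸ hasSum_sum_of_ne_finset_zero hfin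

lemma hasSum_zeta2Term {a b : ℕ} (ha : 1 ≤ a) (h : Summable (zeta2Term a b)) :
    HasSum (zeta2Term a b) (zeta2 a b) := by
  convert h.hasSum
  refine plim_eq_of_tendsto ((h.hasSum.zeta2Term_sum_range.tendsto_sum_nat.comp
    (tendsto_add_atTop_nat 1)).congr fun N => ?_)
  rw [Function.comp_apply, sum_Ico_one_eq_sum_range
    (f := fun n : ℕ => ∑ k ∈ Ico 1 n, 1 / ((k : ℝ) ^ a * (n : ℝ) ^ b)) (by simp)]
  exact sum_congr rfl fun n _ =>
    (sum_Ico_one_eq_sum_range (by simp [zero_pow (by omega : a ≠ 0)]) _).symm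

theorem zetaV_mul_zetaV {a b : ℕ} (ha : 2 ≤ a) (hb : 2 ≤ b) :
    zetaV a * zetaV b = zeta2 a b + zeta2 b a + zetaV (a + b) := by
  have hA := hasSum_zetaV ha
  have hB := hasSum_zetaV hb
  have hprod := hA.mul hB (hA.summable.mul_of_nonneg hB.summable (fun _ => by positivity)
    fun _ => by positivity)
  have hlt : HasSum (zeta2Term a b) (zeta2 a b) :=
    hasSum_zeta2Term (by omega) (summable_zeta2Term (by omega) hb (by omega))
  have hgt : HasSum (zeta2Term b a) (zeta2 b a) :=
    hasSum_zeta2Term (by omega) (summable_zeta2Term (by omega) ha (by omega))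
  have hdiag : HasSum (fun p : ℕ × ℕ => if p.1 = p.2 then 1 / (p.1 : ℝ) ^ (a + b) else 0)
      (zetaV (a + b)) := by
    refine (Function.Injective.hasSum_iff (g := fun k : ℕ => (k, k))
      (fun _ _ h => congrArg Prod.fst h) ?_).1 ?_
    · rintro ⟨k₁, k₂⟩ hk
      exact if_neg fun h => hk ⟨k₁, Prod.ext rfl h⟩
    · simpa [Function.comp_def] using hasSum_zetaV (by omega : 2 ≤ a + b)
  refine hprod.unique (((hlt.add ((Equiv.prodComm ℕ ℕ).hasSum_iff.2 hgt)).add hdiag).congr_fun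
    fun ⟨k₁, k₂⟩ => ?_)
  rcases lt_trichotomy k₁ k₂ with h | rfl | h
  · simp [zeta2Term, h, h.not_gt, h.ne, mul_comm]
  · simp [zeta2Term, pow_add, mul_comm]
  · simp [zeta2Term, h, h.not_gt, h.ne', mul_comm]

lemma hasSum_sub_add_of_antitone {f : ℕ → ℝ} (hf : Antitone f) (hlim : Tendsto f atTop (𝓝 0))
    (n : ℕ) : HasSum (fun d => f d - f (d + n)) (∑ j ∈ range n, f j) := by
  induction n with
  | zero => simp
  | succ n ih =>
    have hstep : HasSum (fun d => f (d + n) - f (d + 1 + n)) (f n) := by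
      refine (hasSum_iff_tendsto_nat_of_nonneg (fun d => sub_nonneg.2 (hf (by omega))) _).2 ?_
      simp only [sum_range_sub' (fun d => f (d + n)), zero_add]
      simpa using tendsto_const_nhds.sub (hlim.comp (tendsto_add_atTop_nat n))
    convert ih.add hstep using 1
    · ext d
      rw [add_right_comm d 1 n, add_assoc]
      ring
    · rw [sum_range_succ]

lemma sum_one_div_pow_mul_add_pow {x e : ℝ} (hx : x ≠ 0) (he : e ≠ 0) (hxe : x + e ≠ 0) (n : ℕ) :
    ∑ ℓ ∈ range n, 1 / (x ^ (ℓ + 1) * (x + e) ^ (n + 1 - ℓ)) + 1 / (e * (x + e) ^ (n + 1)) =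
      (1 / e - 1 / (x + e)) / x ^ (n + 1) := by
  induction n with
  | zero => field_simp; ring
  | succ n ih =>
    have hshift : ∀ ℓ ∈ range n, 1 / (x ^ (ℓ + 1) * (x + e) ^ (n + 1 + 1 - ℓ)) =
        1 / (x ^ (ℓ + 1) * (x + e) ^ (n + 1 - ℓ)) * (1 / (x + e)) := by
      intro ℓ hℓ
      have hℓn := mem_range.1 hℓ
      rw [show n + 1 + 1 - ℓ = n + 1 - ℓ + 1 by omega, pow_succ]
      field_simp
      ring
    rw [sum_range_succ, sum_congr rfl hshift, ← sum_mul, eq_sub_of_add_eq ih,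
      show n + 1 + 1 - n = 2 by omega]
    field_simp
    ring

/-- Enumerates the pairs `0 < k₁ < k₂`. -/
def strictPair (q : ℕ × ℕ) : ℕ × ℕ := (q.1 + 1, q.1 + q.2 + 2)

lemma strictPair_injective : Function.Injective strictPair := by
  rintro ⟨m, d⟩ ⟨m', d'⟩ h
  simp only [strictPair, Prod.mk.injEq] at h ⊢
  omega

lemma zeta2Term_strictPair (a b : ℕ) (q : ℕ × ℕ) :
    zeta2Term a b (strictPair q) =
      1 / (((q.1 : ℝ) + 1) ^ a * ((q.1 : ℝ) + 1 + ((q.2 : ℝ) + 1)) ^ b) := by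
  rw [zeta2Term, if_pos (by simp only [strictPair]; omega)]
  simp only [strictPair]
  push_cast
  ring_nf

lemma hasSum_zeta2Term_comp_strictPair {a b : ℕ} (ha : 1 ≤ a) (h : Summable (zeta2Term a b)) :
    HasSum (zeta2Term a b ∘ strictPair) (zeta2 a b) := by
  refine (strictPair_injective.hasSum_iff fun ⟨k₁, k₂⟩ hp => ?_).2 (hasSum_zeta2Term ha h)
  rcases Nat.eq_zero_or_pos k₁ with rfl | hk₁
  · simp [zeta2Term, zero_pow (by omega : a ≠ 0)]
  · refine if_neg fun hlt => hp ⟨(k₁ - 1, k₂ - k₁ - 1), ?_⟩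
    simp only [strictPair, Prod.mk.injEq]
    omega

/-- At `(k₁, k₂) = strictPair (m, d)` this is `(1 / (k₂ - k₁) - 1 / k₂) / k₁ ^ w`. -/
noncomputable def telescopingTerm (w : ℕ) (q : ℕ × ℕ) : ℝ :=
  (1 / ((q.2 : ℝ) + 1) - 1 / ((q.1 : ℝ) + 1 + ((q.2 : ℝ) + 1))) / ((q.1 : ℝ) + 1) ^ w

lemma hasSum_telescopingTerm {n : ℕ} (hn : 2 ≤ n) :
    HasSum (telescopingTerm (n + 1))
      (∑ ℓ ∈ range n, zeta2 (ℓ + 1) (n + 1 - ℓ) + zeta2 1 (n + 1)) := by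
  have hsummable : ∀ ℓ ∈ range n, Summable (zeta2Term (ℓ + 1) (n + 1 - ℓ)) := fun ℓ hℓ => by
    have hℓn := mem_range.1 hℓ
    exact summable_zeta2Term (by omega) (by omega) (by omega)
  refine ((hasSum_sum fun ℓ hℓ =>
    hasSum_zeta2Term_comp_strictPair (by omega) (hsummable ℓ hℓ)).add
    ((Equiv.prodComm ℕ ℕ).hasSum_iff.2 (hasSum_zeta2Term_comp_strictPair le_rfl
      (summable_zeta2Term le_rfl (by omega) (by omega))))).congr_fun fun ⟨m, d⟩ => ?_
  simp only [telescopingTerm, Function.comp_apply, zeta2Term_strictPair, Equiv.prodComm_apply,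
    Prod.swap, pow_one]
  rw [add_comm ((d : ℝ) + 1) ((m : ℝ) + 1)]
  exact (sum_one_div_pow_mul_add_pow (by positivity) (by positivity) (by positivity) n).symm

lemma hasSum_telescopingTerm_row (w m : ℕ) :
    HasSum (fun d => telescopingTerm w (m, d))
      ((∑ j ∈ range (m + 1), 1 / ((j : ℝ) + 1)) / ((m : ℝ) + 1) ^ w) := by
  have hanti : Antitone fun d : ℕ => 1 / ((d : ℝ) + 1) := fun _ _ h => by dsimp only; gcongr
  refine ((hasSum_sub_add_of_antitone hanti tendsto_one_div_add_atTop_nhds_zero_nat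
    (m + 1)).div_const _).congr_fun fun d => ?_
  simp only [telescopingTerm]
  push_cast
  ring_nf

lemma hasSum_harmonic_div_pow {w : ℕ} (hw : 3 ≤ w) :
    HasSum (fun m : ℕ => (∑ j ∈ range (m + 1), 1 / ((j : ℝ) + 1)) / ((m : ℝ) + 1) ^ w)
      (zeta2 1 w + zetaV (w + 1)) := by
  have hsum := ((hasSum_zeta2Term (b := w) le_rfl (summable_zeta2Term le_rfl (by omega)
    (by omega))).zeta2Term_sum_range.add (hasSum_zetaV (by omega : 2 ≤ w + 1)))
  -- shift to `n = m + 1`; the `n = 0` term is `1 / 0 = 0`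
  rw [← hasSum_nat_add_iff' 1] at hsum
  simp only [sum_range_one, range_zero, sum_empty, CharP.cast_eq_zero,
    zero_pow (by omega : w + 1 ≠ 0), div_zero, add_zero, sub_zero] at hsum
  refine hsum.congr_fun fun m => ?_
  rw [sum_range_succ' (fun k : ℕ => 1 / ((k : ℝ) ^ 1 * ((m + 1 : ℕ) : ℝ) ^ w)), sum_div,
    sum_range_succ (fun j : ℕ => 1 / ((j : ℝ) + 1) / ((m : ℝ) + 1) ^ w)]
  push_cast
  simp only [zero_pow one_ne_zero, zero_mul, div_zero, add_zero, pow_one]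
  congr 1
  · exact sum_congr rfl fun j _ => by rw [div_div]
  · rw [div_div, ← pow_succ']

theorem sum_zeta2_eq_zetaV {n : ℕ} (hn : 2 ≤ n) :
    ∑ ℓ ∈ range n, zeta2 (ℓ + 1) (n + 1 - ℓ) = zetaV (n + 2) := by
  have h := ((hasSum_telescopingTerm hn).prod_fiberwise (hasSum_telescopingTerm_row _)).unique
    (hasSum_harmonic_div_pow (by omega : 3 ≤ n + 1))
  linarith

theorem euler_evaluation (r : ℕ) :
    zeta2 1 (r + 3) =
      ((r : ℝ) + 3) / 2 * zetaV (r + 4) -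
        1 / 2 * ∑ ℓ ∈ Finset.range (r + 1), zetaV (ℓ + 2) * zetaV (r - ℓ + 2) := by
  have hsum :
      zeta2 1 (r + 3) + ∑ ℓ ∈ range (r + 1), zeta2 (ℓ + 2) (r - ℓ + 2) = zetaV (r + 4) := by
    rw [← sum_zeta2_eq_zetaV (n := r + 2) (by omega),
      sum_range_succ' (fun ℓ => zeta2 (ℓ + 1) (r + 2 + 1 - ℓ)), add_comm]
    congr 1
    refine sum_congr rfl fun ℓ hℓ => ?_
    have hℓr := mem_range.1 hℓ
    rw [show r + 2 + 1 - (ℓ + 1) = r - ℓ + 2 by omega]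
  have hstuffle : ∀ ℓ ∈ range (r + 1), zetaV (ℓ + 2) * zetaV (r - ℓ + 2) =
      zeta2 (ℓ + 2) (r - ℓ + 2) + zeta2 (r - ℓ + 2) (ℓ + 2) + zetaV (r + 4) := fun ℓ hℓ => by
    have hℓr := mem_range.1 hℓ
    rw [zetaV_mul_zetaV (by omega) (by omega), show ℓ + 2 + (r - ℓ + 2) = r + 4 by omega]
  have hreflect : ∑ ℓ ∈ range (r + 1), zeta2 (r - ℓ + 2) (ℓ + 2) =
      ∑ ℓ ∈ range (r + 1), zeta2 (ℓ + 2) (r - ℓ + 2) := by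
    rw [← sum_range_reflect (fun ℓ => zeta2 (ℓ + 2) (r - ℓ + 2))]
    refine sum_congr rfl fun ℓ hℓ => ?_
    have hℓr := mem_range.1 hℓ
    rw [show r - (r + 1 - 1 - ℓ) = ℓ by omega, show r + 1 - 1 - ℓ = r - ℓ by omega]
  rw [sum_congr rfl hstuffle, sum_add_distrib, sum_add_distrib, hreflect, sum_const, card_range,
    nsmul_eq_mul]
  push_cast
  linarith
end

section
/- For any nonnegative integer p, ∑_{α₁+α₂=2p+3} (−1)^{α₁} ζ(α₁, α₂+1) = (1/2)·ζ(2p+4), where the sum is over pairs of positive integers (α₁, α₂) with α₁+α₂ = 2p+3. -/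
open Filter

/-! Summing the alternating geometric progression in `a` gives, for `x, y > 0` and even `n`,
`∑_{a=1}^{n} (-1)^a / (x^a y^(n+2-a)) = 1 / (x^n y (x+y)) - 1 / (y^(n+1) (x+y))`.
Summed over `1 ≤ k₁ < k₂ ≤ N`, the partial fractions `1 / (k₂ (k + k₂)) = (1/k₂ - 1/(k + k₂)) / k`
turn both pieces into `∑ₖ k^(-n-1)` times blocks of harmonic sums. These cancel up to `1/(2k)`
and the tail `∑_{m=N+1}^{N+k} 1/m ≤ k/(N+1)`, so the alternating sum of truncated double zeta
values is half the truncated `ζ(n+2)` up to an error `O(1/N)`. -/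

open Finset Topology

noncomputable def zetaPartialSum (s N : ℕ) : ℝ :=
  ∑ k ∈ Ico 1 (N + 1), 1 / (k : ℝ) ^ s

noncomputable def zeta2PartialSum (a b N : ℕ) : ℝ :=
  ∑ k₂ ∈ Ico 1 (N + 1), ∑ k₁ ∈ Ico 1 k₂, 1 / ((k₁ : ℝ) ^ a * (k₂ : ℝ) ^ b)

noncomputable def harmonicTail (N k : ℕ) : ℝ :=
  ∑ m ∈ Ico (N + 1) (N + k + 1), 1 / (m : ℝ)

theorem tendsto_plim_of_monotone {f : ℕ → ℝ} (hf : Monotone f) {C : ℝ} (hC : ∀ N, f N ≤ C) :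
    Tendsto f atTop (𝓝 (plim f)) :=
  tendsto_nhds_limUnder ⟨_, tendsto_atTop_ciSup hf ⟨C, by rintro _ ⟨N, rfl⟩; exact hC N⟩⟩

theorem monotone_sum_Ico_one {g : ℕ → ℝ} (hg : ∀ k, 0 ≤ g k) :
    Monotone fun N => ∑ k ∈ Ico 1 (N + 1), g k :=
  (sum_mono_set_of_nonneg hg).comp fun _ _ h => Ico_subset_Ico_right (by omega)

theorem sum_Ico_one_div_pow_le_two {s : ℕ} (hs : 2 ≤ s) (M : ℕ) :
    ∑ k ∈ Ico 1 M, 1 / (k : ℝ) ^ s ≤ 2 := by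
  calc ∑ k ∈ Ico 1 M, 1 / (k : ℝ) ^ s
      ≤ ∑ k ∈ Ioo 0 M, ((k : ℝ) ^ 2)⁻¹ := by
        rw [← Ico_add_one_left_eq_Ioo]
        refine sum_le_sum fun k hk => ?_
        have hk : (1 : ℝ) ≤ k := by simp only [mem_Ico] at hk; exact_mod_cast hk.1
        rw [one_div]
        gcongr
    _ ≤ 2 / ((0 : ℕ) + 1) := sum_Ioo_inv_sq_le 0 M
    _ = 2 := by norm_num

theorem tendsto_zetaPartialSum {s : ℕ} (hs : 2 ≤ s) :
    Tendsto (zetaPartialSum s) atTop (𝓝 (zetaV s)) :=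
  tendsto_plim_of_monotone (monotone_sum_Ico_one fun _ => by positivity)
    fun N => sum_Ico_one_div_pow_le_two hs (N + 1)

theorem one_div_pow_mul_pow_le {a b : ℕ} (hb : 2 ≤ b) (hab : 4 ≤ a + b) {k₁ k₂ : ℕ}
    (hk₁ : 1 ≤ k₁) (hk : k₁ ≤ k₂) :
    1 / ((k₁ : ℝ) ^ a * (k₂ : ℝ) ^ b) ≤ 1 / (k₁ : ℝ) ^ 2 * (1 / (k₂ : ℝ) ^ 2) := by
  have h1 : (1 : ℝ) ≤ k₁ := by exact_mod_cast hk₁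
  have h12 : (k₁ : ℝ) ≤ k₂ := by exact_mod_cast hk
  have h2 : (0 : ℝ) < k₂ := by linarith
  rw [one_div_mul_one_div]
  refine one_div_le_one_div_of_le (by positivity) ?_
  calc (k₁ : ℝ) ^ 2 * (k₂ : ℝ) ^ 2
      ≤ (k₁ : ℝ) ^ (a + (b - 2)) * (k₂ : ℝ) ^ 2 := by gcongr; omega
    _ = (k₁ : ℝ) ^ a * (k₁ : ℝ) ^ (b - 2) * (k₂ : ℝ) ^ 2 := by rw [pow_add]
    _ ≤ (k₁ : ℝ) ^ a * (k₂ : ℝ) ^ (b - 2) * (k₂ : ℝ) ^ 2 := by gcongr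
    _ = (k₁ : ℝ) ^ a * (k₂ : ℝ) ^ b := by rw [mul_assoc, ← pow_add, Nat.sub_add_cancel hb]

theorem zeta2PartialSum_le_four {a b : ℕ} (hb : 2 ≤ b) (hab : 4 ≤ a + b) (N : ℕ) :
    zeta2PartialSum a b N ≤ 4 := by
  calc zeta2PartialSum a b N
      ≤ ∑ k₂ ∈ Ico 1 (N + 1), ∑ k₁ ∈ Ico 1 k₂, 1 / (k₁ : ℝ) ^ 2 * (1 / (k₂ : ℝ) ^ 2) := by
        refine sum_le_sum fun k₂ _ => sum_le_sum fun k₁ hk₁ => ?_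
        simp only [mem_Ico] at hk₁
        exact one_div_pow_mul_pow_le hb hab hk₁.1 hk₁.2.le
    _ ≤ ∑ k₂ ∈ Ico 1 (N + 1), 2 * (1 / (k₂ : ℝ) ^ 2) := by
        refine sum_le_sum fun k₂ _ => ?_
        rw [← sum_mul]
        gcongr
        exact sum_Ico_one_div_pow_le_two le_rfl k₂
    _ ≤ 2 * 2 := by
        rw [← mul_sum]
        gcongr
        exact sum_Ico_one_div_pow_le_two le_rfl (N + 1)
    _ = 4 := by norm_num

theorem tendsto_zeta2PartialSum {a b : ℕ} (hb : 2 ≤ b) (hab : 4 ≤ a + b) :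
    Tendsto (zeta2PartialSum a b) atTop (𝓝 (zeta2 a b)) :=
  tendsto_plim_of_monotone (monotone_sum_Ico_one fun _ => sum_nonneg fun _ _ => by positivity)
    (zeta2PartialSum_le_four hb hab)

theorem harmonicTail_le (N k : ℕ) : harmonicTail N k ≤ k / (N + 1) := by
  calc harmonicTail N k ≤ ∑ _m ∈ Ico (N + 1) (N + k + 1), 1 / ((N : ℝ) + 1) := by
        refine sum_le_sum fun m hm => ?_
        have hm : (N : ℝ) + 1 ≤ m := by simp only [mem_Ico] at hm; exact_mod_cast hm.1
        gcongr
    _ = k / (N + 1) := by simp [div_eq_mul_inv]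

theorem tendsto_sum_harmonicTail_zero {s : ℕ} (hs : 2 ≤ s) :
    Tendsto (fun N : ℕ => ∑ k ∈ Ico 1 (N + 1), 1 / (k : ℝ) ^ (s + 1) * harmonicTail N k)
      atTop (𝓝 0) := by
  have hbound : ∀ N : ℕ, ∑ k ∈ Ico 1 (N + 1), 1 / (k : ℝ) ^ (s + 1) * harmonicTail N k ≤
      2 / ((N : ℝ) + 1) := by
    intro N
    calc ∑ k ∈ Ico 1 (N + 1), 1 / (k : ℝ) ^ (s + 1) * harmonicTail N k
        ≤ ∑ k ∈ Ico 1 (N + 1), 1 / (k : ℝ) ^ (s + 1) * (k / (N + 1)) :=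
          sum_le_sum fun k _ => by gcongr; exact harmonicTail_le N k
      _ = (∑ k ∈ Ico 1 (N + 1), 1 / (k : ℝ) ^ s) / (N + 1) := by
          rw [sum_div]
          refine sum_congr rfl fun k hk => ?_
          have hk : (k : ℝ) ≠ 0 := Nat.cast_ne_zero.mpr (by simp only [mem_Ico] at hk; omega)
          field_simp
          ring
      _ ≤ 2 / ((N : ℝ) + 1) := by gcongr; exact sum_Ico_one_div_pow_le_two hs (N + 1)
  refine squeeze_zero (fun N => sum_nonneg fun k _ => ?_) hbound ?_
  · exact mul_nonneg (by positivity) (sum_nonneg fun _ _ => by positivity)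
  · exact tendsto_const_nhds.div_atTop
      (tendsto_atTop_add_const_right _ 1 tendsto_natCast_atTop_atTop)

theorem sum_Ico_sub_shift {M : Type*} [AddCommGroup M] (f : ℕ → M) {k N : ℕ} (h : k ≤ N) :
    ∑ m ∈ Ico (k + 1) (N + 1), (f m - f (m + k)) =
      ∑ m ∈ Ico (k + 1) (2 * k + 1), f m - ∑ m ∈ Ico (N + 1) (N + k + 1), f m := by
  have hlow := sum_Ico_consecutive f (by omega : k + 1 ≤ N + 1) (by omega : N + 1 ≤ N + k + 1)
  have hhigh := sum_Ico_consecutive f (by omega : k + 1 ≤ 2 * k + 1)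
    (by omega : 2 * k + 1 ≤ N + k + 1)
  rw [sum_sub_distrib, sum_Ico_add', show k + 1 + k = 2 * k + 1 by omega,
    show N + 1 + k = N + k + 1 by omega, sub_eq_sub_iff_add_eq_add, hlow, hhigh]

theorem sum_Ico_neg_one_pow_div_pow_mul_pow {K : Type*} [Field K] {x y : K}
    (hx : x ≠ 0) (hy : y ≠ 0) (hxy : x + y ≠ 0) (n : ℕ) :
    ∑ a ∈ Ico 1 (n + 1), (-1) ^ a / (x ^ a * y ^ (n + 2 - a)) =
      (-1) ^ n / (x ^ n * y * (x + y)) - 1 / (y ^ (n + 1) * (x + y)) := by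
  have hxy' : -y - x ≠ 0 := by rwa [← neg_add', neg_ne_zero, add_comm]
  have hr : -(y / x) ≠ 1 := by
    rw [← sub_ne_zero, ← neg_div, div_sub_one hx]; exact div_ne_zero hxy' hx
  have hterm : ∀ a ∈ Ico 1 (n + 1), (-1) ^ a / (x ^ a * y ^ (n + 2 - a)) =
      (-(y / x)) ^ a / y ^ (n + 2) := by
    intro a ha
    have hsplit : y ^ (n + 2) = y ^ (n + 2 - a) * y ^ a := by
      rw [← pow_add]; congr 1; simp only [mem_Ico] at ha; omega
    rw [hsplit, neg_pow (y / x), div_pow]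
    field_simp
  rw [sum_congr rfl hterm, ← sum_div, geom_sum_Ico hr (by omega), pow_one, neg_pow (y / x),
    div_pow]
  field_simp
  ring

theorem sum_pairs_one_div_pow_mul_mul_add (n N : ℕ) :
    ∑ k₂ ∈ Ico 1 (N + 1), ∑ k₁ ∈ Ico 1 k₂,
        1 / ((k₁ : ℝ) ^ n * k₂ * ((k₁ : ℝ) + k₂)) =
      ∑ k ∈ Ico 1 (N + 1), 1 / (k : ℝ) ^ (n + 1) *
        (∑ m ∈ Ico (k + 1) (2 * k + 1), 1 / (m : ℝ) - harmonicTail N k) := by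
  rw [sum_comm' (t' := Ico 1 (N + 1)) (s' := fun k₁ => Ico (k₁ + 1) (N + 1))
    (by intro x y; simp only [mem_Ico]; omega)]
  refine sum_congr rfl fun k hk => ?_
  simp only [mem_Ico] at hk
  rw [harmonicTail, ← sum_Ico_sub_shift (fun m : ℕ => 1 / (m : ℝ)) (by omega), mul_sum]
  refine sum_congr rfl fun k₂ hk₂ => ?_
  simp only [mem_Ico] at hk₂
  have : (k : ℝ) ≠ 0 := Nat.cast_ne_zero.mpr (by omega)
  have : (k₂ : ℝ) ≠ 0 := Nat.cast_ne_zero.mpr (by omega)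
  have : (k : ℝ) + k₂ ≠ 0 := by positivity
  push_cast
  field_simp
  ring

theorem sum_pairs_one_div_pow_mul_add (n N : ℕ) :
    ∑ k₂ ∈ Ico 1 (N + 1), ∑ k₁ ∈ Ico 1 k₂, 1 / ((k₂ : ℝ) ^ (n + 1) * ((k₁ : ℝ) + k₂)) =
      ∑ k ∈ Ico 1 (N + 1), 1 / (k : ℝ) ^ (n + 1) * ∑ m ∈ Ico (k + 1) (2 * k), 1 / (m : ℝ) := by
  refine sum_congr rfl fun k _ => ?_
  rw [two_mul, add_comm k 1, ← sum_Ico_add' (fun m : ℕ => 1 / (m : ℝ)), mul_sum]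
  refine sum_congr rfl fun k₁ _ => ?_
  push_cast
  rw [one_div_mul_one_div]

theorem sum_neg_one_pow_mul_zeta2PartialSum {n : ℕ} (hn : Even n) (N : ℕ) :
    ∑ a ∈ Ico 1 (n + 1), (-1 : ℝ) ^ a * zeta2PartialSum a (n + 2 - a) N =
      1 / 2 * zetaPartialSum (n + 2) N -
        ∑ k ∈ Ico 1 (N + 1), 1 / (k : ℝ) ^ (n + 1) * harmonicTail N k := by
  have hpairs : ∑ a ∈ Ico 1 (n + 1), (-1 : ℝ) ^ a * zeta2PartialSum a (n + 2 - a) N =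
      ∑ k₂ ∈ Ico 1 (N + 1), ∑ k₁ ∈ Ico 1 k₂, (1 / ((k₁ : ℝ) ^ n * k₂ * ((k₁ : ℝ) + k₂)) -
        1 / ((k₂ : ℝ) ^ (n + 1) * ((k₁ : ℝ) + k₂))) := by
    simp only [zeta2PartialSum, mul_sum]
    rw [sum_comm]
    refine sum_congr rfl fun k₂ hk₂ => ?_
    rw [sum_comm]
    refine sum_congr rfl fun k₁ hk₁ => ?_
    simp only [mem_Ico] at hk₁
    have : (k₁ : ℝ) ≠ 0 := Nat.cast_ne_zero.mpr (by omega)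
    have : (k₂ : ℝ) ≠ 0 := Nat.cast_ne_zero.mpr (by omega)
    simp only [mul_one_div]
    rw [sum_Ico_neg_one_pow_div_pow_mul_pow (by assumption) (by assumption) (by positivity),
      hn.neg_one_pow]
  rw [hpairs]
  simp only [sum_sub_distrib]
  rw [sum_pairs_one_div_pow_mul_mul_add, sum_pairs_one_div_pow_mul_add, ← sum_sub_distrib,
    zetaPartialSum, mul_sum, ← sum_sub_distrib]
  refine sum_congr rfl fun k hk => ?_
  simp only [mem_Ico] at hk
  have : (k : ℝ) ≠ 0 := Nat.cast_ne_zero.mpr (by omega)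
  rw [sum_Ico_succ_top (by omega)]
  push_cast
  field_simp
  ring

theorem alternating_weighted_sum (p : ℕ) :
    ∑ α₁ ∈ Finset.Ico 1 (2 * p + 3), (-1 : ℝ) ^ α₁ * zeta2 α₁ (2 * p + 3 - α₁ + 1) =
      1 / 2 * zetaV (2 * p + 4) := by
  have hweight : ∀ a ∈ Ico 1 (2 * p + 2 + 1), 2 * p + 3 - a + 1 = 2 * p + 2 + 2 - a := by
    intro a ha; simp only [mem_Ico] at ha; omega
  have hlim : Tendsto (fun N => ∑ a ∈ Ico 1 (2 * p + 2 + 1),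
      (-1 : ℝ) ^ a * zeta2PartialSum a (2 * p + 2 + 2 - a) N) atTop
      (𝓝 (∑ a ∈ Ico 1 (2 * p + 3), (-1 : ℝ) ^ a * zeta2 a (2 * p + 3 - a + 1))) := by
    refine tendsto_finsetSum _ fun a ha => ?_
    rw [hweight a ha]
    exact (tendsto_zeta2PartialSum (by simp only [mem_Ico] at ha; omega) (by omega)).const_mul _
  simp only [sum_neg_one_pow_mul_zeta2PartialSum (n := 2 * p + 2) ⟨p + 1, by ring⟩] at hlim
  refine tendsto_nhds_unique hlim ?_
  rw [show 2 * p + 2 + 2 = 2 * p + 4 by ring]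
  simpa only [sub_zero] using
    ((tendsto_zetaPartialSum (s := 2 * p + 4) (by omega)).const_mul (1 / 2)).sub
      (tendsto_sum_harmonicTail_zero (s := 2 * p + 2) (by omega))
end

section
/- For any nonnegative integers a and b, the duality relation ζ({1}^a, b+2) = ζ({1}^b, a+2) holds. -/
open Filter

/-!
The connected-sum argument of Seki and Yamamoto. The connector
`C(m, n) = m! n! / (m + n)! = 1 / binom(m + n, m)` satisfies `C(m, 0) = C(0, n) = 1` and, by
telescoping, `∑_{m > m₀} C(m, n) / m = C(m₀, n) / n` for `n ≥ 1`, and the same with the roles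
of `m` and `n` exchanged. Write `ζ({1}^a, b+2)` as a nested sum over `0 < m₁ < ⋯ < m_{a+1}` with
an extra factor `C(m_{a+1}, 0)`. The second form of the identity,
`C(m, n₀) / m = ∑_{n > n₀} C(m, n) / n`, trades one factor `1 / m_{a+1}` for a new outermost
summation; after `b + 1` such trades the first form collapses the whole `m`-chain,
`∑_{0 < m₁ < ⋯ < m_{a+1}} C(m_{a+1}, n) / (m₁ ⋯ m_{a+1}) = 1 / n^{a+1}`,
leaving the nested sum for `ζ({1}^b, a+2)` over `0 < n₁ < ⋯ < n_{b+1}`. All sums are taken in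
`ℝ≥0∞`, where they may be reordered freely.
-/

open Topology
open scoped ENNReal

noncomputable section

lemma ENNReal.hasSum_of_add_succ_eq {f g : ℕ → ℝ≥0∞} (hfg : ∀ k, g k + f (k + 1) = f k)
    (hf : Tendsto f atTop (𝓝 0)) : HasSum g (f 0) := by
  have hpartial : ∀ N, ∑ k ∈ Finset.range N, g k + f N = f 0 := by
    intro N
    induction N with
    | zero => simp
    | succ N ih => rw [Finset.sum_range_succ, add_assoc, hfg, ih]
  have hlim : Tendsto (fun N => ∑ k ∈ Finset.range N, g k + f N) atTop (𝓝 (∑' k, g k + 0)) :=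
    (ENNReal.tendsto_nat_tsum g).add hf
  simp only [hpartial, add_zero] at hlim
  rw [tendsto_nhds_unique tendsto_const_nhds hlim]
  exact ENNReal.summable.hasSum

def connector (m n : ℕ) : ℝ≥0∞ := ((m + n).choose m : ℝ≥0∞)⁻¹

lemma connector_comm (m n : ℕ) : connector m n = connector n m := by
  rw [connector, connector, Nat.choose_symm_add, add_comm]

@[simp] lemma connector_zero_right (m : ℕ) : connector m 0 = 1 := by
  simp [connector]

@[simp] lemma connector_zero_left (n : ℕ) : connector 0 n = 1 := by
  rw [connector_comm, connector_zero_right]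

lemma connector_le {n : ℕ} (hn : n ≠ 0) (m : ℕ) : connector m n ≤ ((m + 1 : ℕ) : ℝ≥0∞)⁻¹ := by
  refine ENNReal.inv_le_inv.2 (Nat.cast_le.2 ?_)
  calc m + 1 = (m + 1).choose m := (Nat.choose_succ_self_right m).symm
    _ ≤ (m + n).choose m := Nat.choose_le_choose m (by omega)

lemma tendsto_connector_atTop {n : ℕ} (hn : n ≠ 0) :
    Tendsto (fun m => connector m n) atTop (𝓝 0) :=
  tendsto_of_tendsto_of_tendsto_of_le_of_le tendsto_const_nhds
    (ENNReal.tendsto_inv_nat_nhds_zero.comp (tendsto_add_atTop_nat 1))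
    (fun _ => zero_le) (connector_le hn)

lemma connector_ne_top (m n : ℕ) : connector m n ≠ ⊤ :=
  ENNReal.inv_ne_top.2 (Nat.cast_ne_zero.2 (Nat.choose_pos (by omega)).ne')

lemma connector_succ_left_add {n : ℕ} (hn : n ≠ 0) (m : ℕ) :
    connector (m + 1) n * ((m + 1 : ℕ) : ℝ≥0∞)⁻¹ + connector (m + 1) n * (n : ℝ≥0∞)⁻¹ =
      connector m n * (n : ℝ≥0∞)⁻¹ := by
  have hpascal : ((m + n + 1 : ℕ) : ℝ) * (m + n).choose m =
      (m + 1 + n).choose (m + 1) * (m + 1 : ℕ) := by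
    rw [show m + 1 + n = m + n + 1 by omega]
    exact_mod_cast Nat.add_one_mul_choose_eq (m + n) m
  have hB : ((m + n).choose m : ℝ) ≠ 0 := by exact_mod_cast (Nat.choose_pos (by omega)).ne'
  have hB' : ((m + 1 + n).choose (m + 1) : ℝ) ≠ 0 := by
    exact_mod_cast (Nat.choose_pos (by omega)).ne'
  have hn' : (n : ℝ) ≠ 0 := by exact_mod_cast hn
  have := connector_ne_top m n
  have := connector_ne_top (m + 1) n
  have : ((m + 1 : ℕ) : ℝ≥0∞)⁻¹ ≠ ⊤ := ENNReal.inv_ne_top.2 (by simp)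
  have : (n : ℝ≥0∞)⁻¹ ≠ ⊤ := ENNReal.inv_ne_top.2 (by simpa)
  rw [← ENNReal.toReal_eq_toReal_iff' (by finiteness) (by finiteness),
    ENNReal.toReal_add (by finiteness) (by finiteness)]
  simp only [connector, ENNReal.toReal_mul, ENNReal.toReal_inv, ENNReal.toReal_natCast]
  field_simp
  push_cast at hpascal ⊢
  linear_combination hpascal

/-- `tailSum^[k] w m₀` is the nested sum of `w mₖ / (m₁ ⋯ mₖ)` over `m₀ < m₁ < ⋯ < mₖ`. -/
def tailSum (w : ℕ → ℝ≥0∞) (m₀ : ℕ) : ℝ≥0∞ := ∑' m : {m : ℕ // m₀ < m}, (m : ℝ≥0∞)⁻¹ * w m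

lemma tailSum_eq_tsum_add (w : ℕ → ℝ≥0∞) (m₀ : ℕ) :
    tailSum w m₀ = ∑' k : ℕ, ((k + (m₀ + 1) : ℕ) : ℝ≥0∞)⁻¹ * w (k + (m₀ + 1)) := by
  let e : ℕ ≃ {m : ℕ // m₀ < m} :=
    { toFun k := ⟨k + (m₀ + 1), by omega⟩
      invFun m := m.1 - (m₀ + 1)
      left_inv k := by simp
      right_inv m := Subtype.ext (by have := m.2; simp only; omega) }
  exact (e.tsum_eq _).symm

lemma tailSum_congr {w w' : ℕ → ℝ≥0∞} {m₀ : ℕ} (h : ∀ m, m₀ < m → w m = w' m) :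
    tailSum w m₀ = tailSum w' m₀ :=
  tsum_congr fun m => by rw [h m m.2]

lemma tailSum_const_mul (c : ℝ≥0∞) (w : ℕ → ℝ≥0∞) (m₀ : ℕ) :
    tailSum (fun m => c * w m) m₀ = c * tailSum w m₀ := by
  simp only [tailSum, ← ENNReal.tsum_mul_left, mul_left_comm]

lemma tailSum_mul_const (w : ℕ → ℝ≥0∞) (c : ℝ≥0∞) (m₀ : ℕ) :
    tailSum (fun m => w m * c) m₀ = tailSum w m₀ * c := by
  simp only [tailSum, ← ENNReal.tsum_mul_right, mul_assoc]

lemma tailSum_comm (F : ℕ → ℕ → ℝ≥0∞) (m₀ n₀ : ℕ) :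
    tailSum (fun m => tailSum (F m) n₀) m₀ = tailSum (fun n => tailSum (fun m => F m n) m₀) n₀ := by
  simp only [tailSum, ← ENNReal.tsum_mul_left]
  rw [ENNReal.tsum_comm]
  simp only [mul_left_comm]

lemma iterate_tailSum_congr {w w' : ℕ → ℝ≥0∞} (h : ∀ m, m ≠ 0 → w m = w' m) (k : ℕ) :
    tailSum^[k + 1] w = tailSum^[k + 1] w' := by
  rw [Function.iterate_succ_apply, Function.iterate_succ_apply]
  congr 1
  funext m₀
  exact tailSum_congr fun m hm => h m (by omega)

lemma iterate_tailSum_comm (F : ℕ → ℕ → ℝ≥0∞) (n₀ k m₀ : ℕ) :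
    tailSum^[k] (fun m => tailSum (F m) n₀) m₀ =
      tailSum (fun n => tailSum^[k] (fun m => F m n) m₀) n₀ := by
  induction k generalizing m₀ with
  | zero => rfl
  | succ k ih =>
    simp only [Function.iterate_succ_apply']
    rw [funext ih, tailSum_comm]

lemma tailSum_connector {n : ℕ} (hn : n ≠ 0) (m₀ : ℕ) :
    tailSum (fun m => connector m n) m₀ = connector m₀ n * (n : ℝ≥0∞)⁻¹ := by
  rw [tailSum_eq_tsum_add]
  refine (ENNReal.hasSum_of_add_succ_eq (f := fun k => connector (k + m₀) n * (n : ℝ≥0∞)⁻¹)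
    (fun k => ?_) ?_).tsum_eq.trans (by rw [zero_add])
  · rw [mul_comm, show k + 1 + m₀ = k + m₀ + 1 by omega, ← add_assoc]
    exact connector_succ_left_add hn (k + m₀)
  · simpa using ENNReal.Tendsto.mul_const
      ((tendsto_connector_atTop hn).comp (tendsto_add_atTop_nat m₀))
      (Or.inr (ENNReal.inv_ne_top.2 (by simpa)))

lemma tailSum_connector_right {m : ℕ} (hm : m ≠ 0) (n₀ : ℕ) :
    tailSum (fun n => connector m n) n₀ = connector m n₀ * (m : ℝ≥0∞)⁻¹ := by
  simp only [connector_comm m]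
  exact tailSum_connector hm n₀

lemma iterate_tailSum_connector {n : ℕ} (hn : n ≠ 0) (k m₀ : ℕ) :
    tailSum^[k] (fun m => connector m n) m₀ = connector m₀ n * ((n : ℝ≥0∞)⁻¹) ^ k := by
  induction k generalizing m₀ with
  | zero => simp
  | succ k ih =>
    rw [Function.iterate_succ_apply', funext ih, tailSum_mul_const, tailSum_connector hn,
      pow_succ', mul_assoc]

lemma iterate_tailSum_pow_mul_connector (a p n₀ m₀ : ℕ) :
    tailSum^[a + 1] (fun m : ℕ => (m : ℝ≥0∞)⁻¹ ^ p * connector m n₀) m₀ =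
      tailSum^[p] (fun n => tailSum^[a + 1] (fun m => connector m n) m₀) n₀ := by
  induction p generalizing n₀ with
  | zero => simp
  | succ p ih =>
    have hstep : ∀ m : ℕ, m ≠ 0 → (m : ℝ≥0∞)⁻¹ ^ (p + 1) * connector m n₀ =
        tailSum (fun n => (m : ℝ≥0∞)⁻¹ ^ p * connector m n) n₀ := by
      intro m hm
      rw [tailSum_const_mul, tailSum_connector_right hm, pow_succ, mul_assoc,
        mul_comm _ (connector m n₀)]
    rw [iterate_tailSum_congr hstep, iterate_tailSum_comm, Function.iterate_succ_apply']
    simp only [ih]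

lemma iterate_tailSum_inv_pow_symm (a b : ℕ) :
    tailSum^[a + 1] (fun m : ℕ => (m : ℝ≥0∞)⁻¹ ^ (b + 1)) 0 =
      tailSum^[b + 1] (fun n : ℕ => (n : ℝ≥0∞)⁻¹ ^ (a + 1)) 0 := by
  have h := iterate_tailSum_pow_mul_connector a (b + 1) 0 0
  simp only [connector_zero_right, mul_one] at h
  rw [h, iterate_tailSum_congr fun n hn => iterate_tailSum_connector hn (a + 1) 0]
  simp only [connector_zero_left, one_mul]

def IsChainAbove {r : ℕ} (m₀ : ℕ) (f : Fin r → ℕ) : Prop := StrictMono f ∧ ∀ i, m₀ < f i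

lemma isChainAbove_cons_iff {r m₀ m : ℕ} {g : Fin r → ℕ} :
    IsChainAbove m₀ (Fin.cons m g : Fin (r + 1) → ℕ) ↔ m₀ < m ∧ IsChainAbove m g := by
  simp only [IsChainAbove, Fin.strictMono_cons, Fin.forall_fin_succ, Fin.cons_zero, Fin.cons_succ]
  exact ⟨fun ⟨⟨hmg, hg⟩, hm, _⟩ => ⟨hm, hg, hmg⟩,
    fun ⟨hm, hg, hmg⟩ => ⟨⟨hmg, hg⟩, hm, fun i => hm.trans (hmg i)⟩⟩

def chainConsEquiv (r m₀ : ℕ) :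
    (Σ m : {m : ℕ // m₀ < m}, {g : Fin r → ℕ // IsChainAbove m g}) ≃
      {f : Fin (r + 1) → ℕ // IsChainAbove m₀ f} where
  toFun p := ⟨Fin.cons p.1 p.2.1, isChainAbove_cons_iff.2 ⟨p.1.2, p.2.2⟩⟩
  invFun f :=
    have hf := isChainAbove_cons_iff.1 ((Fin.cons_self_tail f.1).symm ▸ f.2)
    ⟨⟨f.1 0, hf.1⟩, Fin.tail f.1, hf.2⟩
  left_inv p := by
    obtain ⟨⟨m, hm⟩, g, hg⟩ := p
    rfl
  right_inv f := Subtype.ext (Fin.cons_self_tail f.1)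

def chainSum {r : ℕ} (α : Fin r → ℕ) (m₀ : ℕ) : ℝ≥0∞ :=
  ∑' f : {f : Fin r → ℕ // IsChainAbove m₀ f}, ∏ i, (f.1 i : ℝ≥0∞)⁻¹ ^ α i

lemma chainSum_zero (α : Fin 0 → ℕ) (m₀ : ℕ) : chainSum α m₀ = 1 := by
  have : Unique {f : Fin 0 → ℕ // IsChainAbove m₀ f} :=
    { default := ⟨finZeroElim, fun i => i.elim0, fun i => i.elim0⟩
      uniq _ := Subtype.ext (funext fun i => i.elim0) }
  simp [chainSum]

lemma chainSum_succ {r : ℕ} (α : Fin (r + 1) → ℕ) (m₀ : ℕ) :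
    chainSum α m₀ =
      ∑' m : {m : ℕ // m₀ < m}, (m : ℝ≥0∞)⁻¹ ^ α 0 * chainSum (Fin.tail α) m := by
  rw [chainSum, ← (chainConsEquiv r m₀).tsum_eq, ENNReal.tsum_sigma']
  refine tsum_congr fun m => ?_
  rw [chainSum, ← ENNReal.tsum_mul_left]
  refine tsum_congr fun g => ?_
  simp [chainConsEquiv, Fin.prod_univ_succ, Fin.tail]

lemma snoc_const_one_eq_cons (a x : ℕ) :
    (Fin.snoc (fun _ : Fin (a + 1) => 1) x : Fin (a + 2) → ℕ) =
      Fin.cons 1 (Fin.snoc (fun _ : Fin a => 1) x) := by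
  rw [Fin.cons_snoc_eq_snoc_cons]
  congr
  funext i
  cases i using Fin.cases <;> rfl

lemma chainSum_heightOne (a b m₀ : ℕ) :
    chainSum (Fin.snoc (fun _ : Fin a => 1) (b + 2) : Fin (a + 1) → ℕ) m₀ =
      tailSum^[a + 1] (fun m : ℕ => (m : ℝ≥0∞)⁻¹ ^ (b + 1)) m₀ := by
  induction a generalizing m₀ with
  | zero =>
    rw [chainSum_succ, Function.iterate_one, tailSum]
    refine tsum_congr fun m => ?_
    rw [chainSum_zero, mul_one, ← pow_succ']
    rfl
  | succ a ih =>
    rw [snoc_const_one_eq_cons, chainSum_succ, Function.iterate_succ_apply', tailSum]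
    refine tsum_congr fun m => ?_
    rw [Fin.cons_zero, Fin.tail_cons, pow_one, ih]

lemma mzv_eq_toReal_chainSum {r : ℕ} (α : Fin r → ℕ) : mzv α = (chainSum α 0).toReal := by
  rw [chainSum, ENNReal.tsum_toReal_eq fun f => ENNReal.prod_ne_top fun i _ =>
    ENNReal.pow_ne_top (ENNReal.inv_ne_top.2 (Nat.cast_ne_zero.2 (f.2.2 i).ne'))]
  refine tsum_congr fun f => ?_
  simp [ENNReal.toReal_prod]

end

theorem height_one_duality (a b : ℕ) : heightOne a b = heightOne b a := by
  rw [heightOne, heightOne, mzv_eq_toReal_chainSum, mzv_eq_toReal_chainSum, chainSum_heightOne,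
    chainSum_heightOne, iterate_tailSum_inv_pow_symm]
end

section
/- For any nonnegative integer m, ζ⋆({1}^m, 2) = (m+1)·ζ(m+2). -/
open Filter

/-!
Splitting off the largest index, `ζ⋆({1}^m, 2) = ∑_{n ≥ 1} S_m(n) / n²`, where
`S_m(n) = ∑_{1 ≤ k₁ ≤ ⋯ ≤ k_m ≤ n} 1/(k₁⋯k_m)`. Integrating by parts on `(0, 1)`,
`∫ u^j (-log u)^p du = p! / (j+1)^(p+1)` and `∫ (1 - u)^n (-log u)^m du = m! S_m(n+1) / (n+1)`;
for the latter, both sides obey the recursion `S_{m+1}(n+1) = S_{m+1}(n) + S_m(n+1) / (n+1)`.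
Since `∑ (1 - u)^n / (n+1) = -log u / (1 - u) = -log u ∑ u^j`, both sides of the theorem equal
`(1/m!) ∫ (-log u)^(m+1) / (1 - u) du`. Everything is nonnegative, so sums and integrals are
interchanged in `ℝ≥0∞`.
-/

open Real MeasureTheory Set Topology
open scoped ENNReal

/-- `starHarmonic m n = ∑_{1 ≤ k₁ ≤ ⋯ ≤ k_m ≤ n} 1/(k₁⋯k_m)`. -/
noncomputable def starHarmonic : ℕ → ℕ → ℝ
  | 0, _ => 1
  | m + 1, n => ∑ k ∈ Finset.Icc 1 n, starHarmonic m k / k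

lemma starHarmonic_nonneg (m n : ℕ) : 0 ≤ starHarmonic m n := by
  induction m generalizing n with
  | zero => exact zero_le_one
  | succ m ih => exact Finset.sum_nonneg fun k _ => div_nonneg (ih k) k.cast_nonneg

lemma starHarmonic_one (m : ℕ) : starHarmonic m 1 = 1 := by
  induction m with
  | zero => rfl
  | succ m ih => simp [starHarmonic, ih]

lemma starHarmonic_succ_succ (m n : ℕ) :
    starHarmonic (m + 1) (n + 1) =
      starHarmonic (m + 1) n + starHarmonic m (n + 1) / (n + 1) := by
  simp [starHarmonic, Finset.sum_Icc_succ_top]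

lemma Fin.monotone_snoc {α : Type*} [Preorder α] {m : ℕ} {g : Fin m → α} {a : α}
    (hg : Monotone g) (ha : ∀ i, g i ≤ a) : Monotone (Fin.snoc g a : Fin (m + 1) → α) := by
  intro i j hij
  induction j using Fin.lastCases with
  | last =>
    induction i using Fin.lastCases with
    | last => exact le_rfl
    | cast i => simpa using ha i
  | cast j =>
    induction i using Fin.lastCases with
    | last => exact absurd hij (not_le.mpr (Fin.castSucc_lt_last j))
    | cast i => simpa using hg (Fin.castSucc_le_castSucc_iff.mp hij)

def chainSnocEquiv (m : ℕ) {p : ℕ → Prop} (hp : ∀ ⦃x y⦄, x ≤ y → p y → p x) :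
    {f : Fin (m + 1) → ℕ // Monotone f ∧ ∀ i, 1 ≤ f i ∧ p (f i)} ≃
      Σ k : {k : ℕ // 1 ≤ k ∧ p k}, {g : Fin m → ℕ // Monotone g ∧ ∀ i, 1 ≤ g i ∧ g i ≤ k} where
  toFun f := ⟨⟨f.1 (Fin.last m), f.2.2 _⟩, Fin.init f.1,
    fun _ _ hij => f.2.1 (Fin.castSucc_le_castSucc_iff.mpr hij),
    fun i => ⟨(f.2.2 _).1, f.2.1 (Fin.le_last _)⟩⟩
  invFun x := ⟨Fin.snoc x.2.1 x.1.1, Fin.monotone_snoc x.2.2.1 fun i => (x.2.2.2 i).2, by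
    refine Fin.lastCases ?_ fun i => ?_
    · simpa using x.1.2
    · simpa using ⟨(x.2.2.2 i).1, hp (x.2.2.2 i).2 x.1.2.2⟩⟩
  left_inv f := Subtype.ext (Fin.snoc_init_self f.1)
  right_inv x := Sigma.subtype_ext (Subtype.ext (Fin.snoc_last (α := fun _ => ℕ) ..))
    (Fin.init_snoc (α := fun _ => ℕ) ..)

lemma tsum_chain_succ (m : ℕ) {p : ℕ → Prop} (hp : ∀ ⦃x y⦄, x ≤ y → p y → p x)
    (w : ℕ → ℝ≥0∞) :
    ∑' f : {f : Fin (m + 1) → ℕ // Monotone f ∧ ∀ i, 1 ≤ f i ∧ p (f i)},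
        (∏ i : Fin m, (f.1 i.castSucc : ℝ≥0∞)⁻¹) * w (f.1 (Fin.last m)) =
      ∑' k : {k : ℕ // 1 ≤ k ∧ p k},
        (∑' g : {g : Fin m → ℕ // Monotone g ∧ ∀ i, 1 ≤ g i ∧ g i ≤ k},
          ∏ i, (g.1 i : ℝ≥0∞)⁻¹) * w k := by
  rw [← (chainSnocEquiv m hp).symm.tsum_eq, ENNReal.tsum_sigma']
  refine tsum_congr fun k => ?_
  rw [← ENNReal.tsum_mul_right]
  refine tsum_congr fun g => ?_
  simp [chainSnocEquiv]

lemma tsum_boundedChain_eq_starHarmonic (m b : ℕ) :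
    ∑' g : {g : Fin m → ℕ // Monotone g ∧ ∀ i, 1 ≤ g i ∧ g i ≤ b}, ∏ i, (g.1 i : ℝ≥0∞)⁻¹ =
      ENNReal.ofReal (starHarmonic m b) := by
  induction m generalizing b with
  | zero =>
    have : Unique {g : Fin 0 → ℕ // Monotone g ∧ ∀ i, 1 ≤ g i ∧ g i ≤ b} :=
      ⟨⟨⟨finZeroElim, fun i => i.elim0, fun i => i.elim0⟩⟩,
        fun _ => Subtype.ext (funext fun i => i.elim0)⟩
    simp [starHarmonic]
  | succ m ih =>
    simp_rw [Fin.prod_univ_castSucc]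
    refine (tsum_chain_succ m (p := (· ≤ b)) (fun _ _ => le_trans)
      fun k => (k : ℝ≥0∞)⁻¹).trans ?_
    simp only [ih]
    refine (tsum_subtype (Set.Icc 1 b)
      fun k => ENNReal.ofReal (starHarmonic m k) * (k : ℝ≥0∞)⁻¹).trans ?_
    rw [← Finset.coe_Icc, ← sum_eq_tsum_indicator, starHarmonic,
      ENNReal.ofReal_sum_of_nonneg fun k _ => div_nonneg (starHarmonic_nonneg m k) k.cast_nonneg]
    refine Finset.sum_congr rfl fun k hk => ?_
    rw [ENNReal.ofReal_div_of_pos (mod_cast (Finset.mem_Icc.mp hk).1), ENNReal.ofReal_natCast,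
      div_eq_mul_inv]

/-- No summability is needed: a divergent sum in `ℝ≥0∞` is `⊤`, whose `toReal` is `0`, the junk
value of a divergent real `tsum`. -/
lemma mzvStar_eq_toReal_tsum {r : ℕ} (α : Fin r → ℕ) :
    mzvStar α = (∑' k : {f : Fin r → ℕ // Monotone f ∧ ∀ i, 1 ≤ f i},
      ∏ i, ((k.1 i : ℝ≥0∞) ^ α i)⁻¹).toReal := by
  rw [ENNReal.tsum_toReal_eq fun k => ENNReal.prod_ne_top fun i _ => by
    simp [Nat.one_le_iff_ne_zero.mp (k.2.2 i)]]
  simp [mzvStar, ENNReal.toReal_prod]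

lemma heightOneStar_zero_eq_toReal_tsum (m : ℕ) :
    heightOneStar m 0 =
      (∑' n : ℕ, ENNReal.ofReal (starHarmonic m (n + 1) / ((n : ℝ) + 1) ^ 2)).toReal := by
  rw [heightOneStar, mzvStar_eq_toReal_tsum]
  congr 1
  let chainEquiv : {f : Fin (m + 1) → ℕ // Monotone f ∧ ∀ i, 1 ≤ f i ∧ True} ≃
      {f : Fin (m + 1) → ℕ // Monotone f ∧ ∀ i, 1 ≤ f i} :=
    Equiv.subtypeEquivRight fun f => by simp only [and_true]
  let succEquiv : ℕ ≃ {k : ℕ // 1 ≤ k ∧ True} :=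
    ⟨fun n => ⟨n + 1, n.succ_pos, trivial⟩, fun k => k.1 - 1, fun _ => rfl,
      fun k => Subtype.ext (Nat.sub_add_cancel k.2.1)⟩
  calc _ = ∑' f : {f : Fin (m + 1) → ℕ // Monotone f ∧ ∀ i, 1 ≤ f i ∧ True},
          (∏ i : Fin m, (f.1 i.castSucc : ℝ≥0∞)⁻¹) * ((f.1 (Fin.last m) : ℝ≥0∞) ^ 2)⁻¹ := by
        rw [← chainEquiv.tsum_eq]
        simp [chainEquiv, Fin.prod_univ_castSucc]
    _ = ∑' k : {k : ℕ // 1 ≤ k ∧ True},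
          ENNReal.ofReal (starHarmonic m k) * ((k : ℝ≥0∞) ^ 2)⁻¹ := by
        refine (tsum_chain_succ m (p := fun _ => True) (fun _ _ _ _ => trivial)
          fun k => ((k : ℝ≥0∞) ^ 2)⁻¹).trans ?_
        simp only [tsum_boundedChain_eq_starHarmonic]
    _ = _ := by
        rw [← succEquiv.tsum_eq]
        refine tsum_congr fun n => ?_
        rw [ENNReal.ofReal_div_of_pos (by positivity), ← Nat.cast_succ,
          ENNReal.ofReal_pow n.succ.cast_nonneg, ENNReal.ofReal_natCast, div_eq_mul_inv]
        rfl

lemma neg_log_nonneg {u : ℝ} (hu : 0 ≤ u) (hu₁ : u ≤ 1) : 0 ≤ -log u :=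
  neg_nonneg.mpr (log_nonpos hu hu₁)

lemma neg_log_pow_le (c : ℕ) {u : ℝ} (hu : 0 < u) (hu₁ : u ≤ 1) :
    (-log u) ^ c ≤ ((c : ℝ) + 1) ^ c * u ^ (-(c / (c + 1) : ℝ)) := by
  have hlog := log_le_rpow_div (inv_nonneg.mpr hu.le) (by positivity : (0 : ℝ) < 1 / (c + 1))
  rw [log_inv] at hlog
  calc (-log u) ^ c ≤ (u⁻¹ ^ (1 / (c + 1) : ℝ) / (1 / (c + 1))) ^ c :=
        pow_le_pow_left₀ (neg_log_nonneg hu.le hu₁) hlog c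
    _ = ((c : ℝ) + 1) ^ c * u ^ (-(c / (c + 1) : ℝ)) := by
        rw [div_eq_mul_inv, one_div, inv_inv, mul_pow, mul_comm, ← rpow_natCast (u⁻¹ ^ _),
          ← rpow_mul (inv_nonneg.mpr hu.le), inv_rpow hu.le, ← rpow_neg hu.le, inv_mul_eq_div]

lemma intervalIntegrable_neg_log_pow (c : ℕ) :
    IntervalIntegrable (fun u => (-log u) ^ c) volume 0 1 := by
  have hbound : IntervalIntegrable (fun u : ℝ => ((c : ℝ) + 1) ^ c * u ^ (-(c / (c + 1) : ℝ)))
      volume 0 1 :=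
    (intervalIntegral.intervalIntegrable_rpow'
      (by rw [neg_lt_neg_iff, div_lt_one (by positivity)]; linarith)).const_mul _
  rw [intervalIntegrable_iff_integrableOn_Ioc_of_le zero_le_one] at hbound ⊢
  refine hbound.mono' (by fun_prop) ?_
  filter_upwards [ae_restrict_mem measurableSet_Ioc] with u hu
  rw [norm_of_nonneg (pow_nonneg (neg_log_nonneg hu.1.le hu.2) c)]
  exact neg_log_pow_le c hu.1 hu.2

lemma intervalIntegrable_mul_neg_log_pow {g : ℝ → ℝ} (hg : Continuous g) (c : ℕ) :
    IntervalIntegrable (fun u => g u * (-log u) ^ c) volume 0 1 :=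
  (intervalIntegrable_neg_log_pow c).continuousOn_mul hg.continuousOn

lemma tendsto_mul_neg_log_pow (c : ℕ) : Tendsto (fun u => u * (-log u) ^ c) (𝓝[>] 0) (𝓝 0) := by
  have hlog : Tendsto (fun u => -log u) (𝓝[>] 0) atTop :=
    tendsto_neg_atBot_atTop.comp tendsto_log_nhdsGT_zero
  refine ((tendsto_pow_mul_exp_neg_atTop_nhds_zero c).comp hlog).congr' ?_
  filter_upwards [self_mem_nhdsWithin] with u (hu : 0 < u)
  simp [exp_log hu, mul_comm]

lemma continuousOn_mul_mul_neg_log_pow {g : ℝ → ℝ} (hg : Continuous g) (c : ℕ) :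
    ContinuousOn (fun u => u * g u * (-log u) ^ c) (Icc 0 1) := by
  intro x hx
  rcases eq_or_ne x 0 with rfl | hx₀
  · rw [← continuousWithinAt_sdiff_self]
    have hlim := (tendsto_mul_neg_log_pow c).mul ((hg.tendsto 0).mono_left nhdsWithin_le_nhds)
    rw [zero_mul] at hlim
    rw [ContinuousWithinAt, zero_mul, zero_mul]
    refine (hlim.mono_left (nhdsWithin_mono _ fun u hu => ?_)).congr fun u => by ring
    exact lt_of_le_of_ne hu.1.1 (Ne.symm hu.2)
  · exact (((continuous_id.mul hg).continuousAt).mul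
      ((continuousAt_log hx₀).neg.pow c)).continuousWithinAt

lemma hasDerivAt_neg_log_pow_succ (c : ℕ) {x : ℝ} (hx : x ≠ 0) :
    HasDerivAt (fun u => (-log u) ^ (c + 1)) (-((c + 1) * (-log x) ^ c / x)) x := by
  refine ((hasDerivAt_log hx).neg.fun_pow (c + 1)).congr_deriv ?_
  simp only [Nat.add_sub_cancel, Pi.neg_apply]
  push_cast
  ring

lemma integral_pow_mul_neg_log_pow_succ (j p : ℕ) :
    ((j : ℝ) + 1) * ∫ u in 0..1, u ^ j * (-log u) ^ (p + 1) =
      ((p : ℝ) + 1) * ∫ u in 0..1, u ^ j * (-log u) ^ p := by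
  have hderiv : ∀ x ∈ Ioo (0 : ℝ) 1, HasDerivAt (fun u => u * u ^ j * (-log u) ^ (p + 1))
      ((j + 1) * (x ^ j * (-log x) ^ (p + 1)) - (p + 1) * (x ^ j * (-log x) ^ p)) x := by
    intro x hx
    have hx₀ : x ≠ 0 := hx.1.ne'
    have hpow : HasDerivAt (fun u : ℝ => u * u ^ j) ((j + 1) * x ^ j) x := by
      simpa [← pow_succ'] using hasDerivAt_pow (j + 1) x
    refine (hpow.mul (hasDerivAt_neg_log_pow_succ p hx₀)).congr_deriv ?_
    field_simp
    ring
  have hint₁ := intervalIntegrable_mul_neg_log_pow (continuous_pow j) (p + 1)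
  have hint₀ := intervalIntegrable_mul_neg_log_pow (continuous_pow j) p
  have hftc : ∫ x in 0..1,
      (j + 1) * (x ^ j * (-log x) ^ (p + 1)) - (p + 1) * (x ^ j * (-log x) ^ p) = 0 := by
    rw [intervalIntegral.integral_eq_sub_of_hasDerivAt_of_le zero_le_one
      (continuousOn_mul_mul_neg_log_pow (continuous_pow j) (p + 1)) hderiv
      ((hint₁.const_mul _).sub (hint₀.const_mul _))]
    simp
  rw [intervalIntegral.integral_sub (hint₁.const_mul _) (hint₀.const_mul _),
    intervalIntegral.integral_const_mul, intervalIntegral.integral_const_mul] at hftc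
  linarith

lemma integral_pow_mul_neg_log_pow (j p : ℕ) :
    ∫ u in 0..1, u ^ j * (-log u) ^ p = p.factorial / ((j : ℝ) + 1) ^ (p + 1) := by
  induction p with
  | zero => simp [integral_pow]
  | succ p ih =>
    have h := integral_pow_mul_neg_log_pow_succ j p
    rw [ih] at h
    rw [Nat.factorial_succ, Nat.cast_mul, eq_div_iff (by positivity)]
    field_simp at h
    push_cast
    linear_combination h

lemma integral_one_sub_pow_mul_neg_log_pow_succ (n m : ℕ) :
    ((n : ℝ) + 2) * ∫ u in 0..1, (1 - u) ^ (n + 1) * (-log u) ^ (m + 1) =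
      ((n : ℝ) + 1) * (∫ u in 0..1, (1 - u) ^ n * (-log u) ^ (m + 1)) +
        ((m : ℝ) + 1) * ∫ u in 0..1, (1 - u) ^ (n + 1) * (-log u) ^ m := by
  have hderiv : ∀ x ∈ Ioo (0 : ℝ) 1,
      HasDerivAt (fun u => u * (1 - u) ^ (n + 1) * (-log u) ^ (m + 1))
        ((n + 2) * ((1 - x) ^ (n + 1) * (-log x) ^ (m + 1)) -
          (n + 1) * ((1 - x) ^ n * (-log x) ^ (m + 1)) -
          (m + 1) * ((1 - x) ^ (n + 1) * (-log x) ^ m)) x := by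
    intro x hx
    have hx₀ : x ≠ 0 := hx.1.ne'
    have hpow : HasDerivAt (fun u : ℝ => (1 - u) ^ (n + 1)) (-((n + 1) * (1 - x) ^ n)) x := by
      refine ((hasDerivAt_id x).const_sub 1).fun_pow (n + 1) |>.congr_deriv ?_
      simp only [Nat.add_sub_cancel, id]
      push_cast
      ring
    refine (((hasDerivAt_id' x).mul hpow).mul
      (hasDerivAt_neg_log_pow_succ m hx₀)).congr_deriv ?_
    simp only [Pi.mul_apply]
    field_simp
    ring
  have hint₁ := intervalIntegrable_mul_neg_log_pow (g := fun u => (1 - u) ^ (n + 1))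
    (by fun_prop) (m + 1)
  have hint₀ := intervalIntegrable_mul_neg_log_pow (g := fun u => (1 - u) ^ n)
    (by fun_prop) (m + 1)
  have hint₂ := intervalIntegrable_mul_neg_log_pow (g := fun u => (1 - u) ^ (n + 1))
    (by fun_prop) m
  have hftc : ∫ x in 0..1, (n + 2) * ((1 - x) ^ (n + 1) * (-log x) ^ (m + 1)) -
      (n + 1) * ((1 - x) ^ n * (-log x) ^ (m + 1)) -
      (m + 1) * ((1 - x) ^ (n + 1) * (-log x) ^ m) = 0 := by
    rw [intervalIntegral.integral_eq_sub_of_hasDerivAt_of_le zero_le_one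
      (continuousOn_mul_mul_neg_log_pow (g := fun u => (1 - u) ^ (n + 1)) (by fun_prop) (m + 1))
      hderiv (((hint₁.const_mul _).sub (hint₀.const_mul _)).sub (hint₂.const_mul _))]
    simp
  rw [intervalIntegral.integral_sub ((hint₁.const_mul _).sub (hint₀.const_mul _))
      (hint₂.const_mul _), intervalIntegral.integral_sub (hint₁.const_mul _) (hint₀.const_mul _),
    intervalIntegral.integral_const_mul, intervalIntegral.integral_const_mul,
    intervalIntegral.integral_const_mul] at hftc
  linarith

lemma integral_one_sub_pow_mul_neg_log_pow (n m : ℕ) :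
    ∫ u in 0..1, (1 - u) ^ n * (-log u) ^ m =
      m.factorial * starHarmonic m (n + 1) / (n + 1) := by
  induction m generalizing n with
  | zero =>
    simp only [pow_zero, mul_one, Nat.factorial_zero, Nat.cast_one, starHarmonic]
    rw [intervalIntegral.integral_comp_sub_left (fun u => u ^ n)]
    simp [integral_pow]
  | succ m ihm =>
    induction n with
    | zero => simpa [starHarmonic_one] using integral_pow_mul_neg_log_pow 0 (m + 1)
    | succ n ihn =>
      have h := integral_one_sub_pow_mul_neg_log_pow_succ n m
      rw [ihn, ihm] at h
      rw [eq_div_iff (by positivity), starHarmonic_succ_succ]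
      simp only [Nat.factorial_succ] at h ⊢
      push_cast at h ⊢
      field_simp at h ⊢
      linear_combination h

lemma lintegral_Ioo_ofReal_eq_integral {f : ℝ → ℝ} (hf : IntervalIntegrable f volume 0 1)
    (hf₀ : ∀ u ∈ Ioo (0 : ℝ) 1, 0 ≤ f u) :
    ∫⁻ u in Ioo 0 1, ENNReal.ofReal (f u) = ENNReal.ofReal (∫ u in 0..1, f u) := by
  rw [intervalIntegral.integral_of_le zero_le_one, integral_Ioc_eq_integral_Ioo,
    ofReal_integral_eq_lintegral_ofReal (hf.1.mono_set Ioo_subset_Ioc_self)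
      ((ae_restrict_iff' measurableSet_Ioo).mpr (.of_forall hf₀))]

lemma hasSum_one_sub_pow_div_succ {u : ℝ} (hu : u ∈ Ioo (0 : ℝ) 1) :
    HasSum (fun n : ℕ => (1 - u) ^ n / (n + 1)) (-log u / (1 - u)) := by
  have h := (Real.hasSum_pow_div_log_of_abs_lt_one (x := 1 - u)
    (by rw [abs_lt]; constructor <;> linarith [hu.1, hu.2])).div_const (1 - u)
  rw [sub_sub_cancel] at h
  refine h.congr_fun fun n => ?_
  have : 1 - u ≠ 0 := by linarith [hu.2]
  field_simp
  ring

lemma tsum_starHarmonic_div_sq (m : ℕ) :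
    ∑' n : ℕ, ENNReal.ofReal (starHarmonic m (n + 1) / ((n : ℝ) + 1) ^ 2) =
      ∑' j : ℕ, ENNReal.ofReal ((m + 1) / ((j : ℝ) + 1) ^ (m + 2)) := by
  have hlog (u : ℝ) (hu : u ∈ Ioo (0 : ℝ) 1) : 0 ≤ -log u := neg_log_nonneg hu.1.le hu.2.le
  have hterm_n (n : ℕ) : ENNReal.ofReal (starHarmonic m (n + 1) / ((n : ℝ) + 1) ^ 2) =
      ∫⁻ u in Ioo 0 1, ENNReal.ofReal ((1 - u) ^ n * (-log u) ^ m / (m.factorial * (n + 1))) := by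
    rw [lintegral_Ioo_ofReal_eq_integral
      ((intervalIntegrable_mul_neg_log_pow (g := fun u => (1 - u) ^ n) (by fun_prop) m).div_const _)
      fun u hu => div_nonneg (mul_nonneg (pow_nonneg (by linarith [hu.2]) n)
        (pow_nonneg (hlog u hu) m)) (by positivity),
      intervalIntegral.integral_div, integral_one_sub_pow_mul_neg_log_pow]
    congr 1
    field_simp
  have hterm_j (j : ℕ) : ENNReal.ofReal ((m + 1) / ((j : ℝ) + 1) ^ (m + 2)) =
      ∫⁻ u in Ioo 0 1, ENNReal.ofReal (u ^ j * (-log u) ^ (m + 1) / m.factorial) := by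
    rw [lintegral_Ioo_ofReal_eq_integral
      ((intervalIntegrable_mul_neg_log_pow (continuous_pow j) (m + 1)).div_const _)
      fun u hu => div_nonneg (mul_nonneg (pow_nonneg hu.1.le j) (pow_nonneg (hlog u hu) _))
        (by positivity),
      intervalIntegral.integral_div, integral_pow_mul_neg_log_pow, Nat.factorial_succ]
    congr 1
    push_cast
    field_simp
  have hpoint : ∀ u ∈ Ioo (0 : ℝ) 1,
      ∑' n : ℕ, ENNReal.ofReal ((1 - u) ^ n * (-log u) ^ m / (m.factorial * (n + 1))) =
        ∑' j : ℕ, ENNReal.ofReal (u ^ j * (-log u) ^ (m + 1) / m.factorial) := by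
    intro u hu
    have h₁ : 0 < 1 - u := by linarith [hu.2]
    have hs_n := ((hasSum_one_sub_pow_div_succ hu).mul_left ((-log u) ^ m / m.factorial)).congr_fun
      fun n : ℕ => show (1 - u) ^ n * (-log u) ^ m / (m.factorial * (n + 1)) = _ by field_simp
    have hs_j := ((hasSum_geometric_of_lt_one hu.1.le hu.2).mul_left
      ((-log u) ^ (m + 1) / m.factorial)).congr_fun
      fun j : ℕ => show u ^ j * (-log u) ^ (m + 1) / m.factorial = _ by ring
    rw [← ENNReal.ofReal_tsum_of_nonneg (fun n => div_nonneg
        (mul_nonneg (pow_nonneg h₁.le n) (pow_nonneg (hlog u hu) m)) (by positivity))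
        hs_n.summable,
      ← ENNReal.ofReal_tsum_of_nonneg (fun j => div_nonneg
        (mul_nonneg (pow_nonneg hu.1.le j) (pow_nonneg (hlog u hu) _)) (by positivity))
        hs_j.summable,
      hs_n.tsum_eq, hs_j.tsum_eq]
    congr 1
    field_simp
    ring
  calc _ = ∑' n : ℕ, ∫⁻ u in Ioo 0 1,
        ENNReal.ofReal ((1 - u) ^ n * (-log u) ^ m / (m.factorial * (n + 1))) :=
      tsum_congr hterm_n
    _ = ∫⁻ u in Ioo 0 1, ∑' n : ℕ,
        ENNReal.ofReal ((1 - u) ^ n * (-log u) ^ m / (m.factorial * (n + 1))) :=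
      (lintegral_tsum fun n => by fun_prop).symm
    _ = ∫⁻ u in Ioo 0 1, ∑' j : ℕ, ENNReal.ofReal (u ^ j * (-log u) ^ (m + 1) / m.factorial) :=
      setLIntegral_congr_fun measurableSet_Ioo hpoint
    _ = ∑' j : ℕ, ∫⁻ u in Ioo 0 1, ENNReal.ofReal (u ^ j * (-log u) ^ (m + 1) / m.factorial) :=
      lintegral_tsum fun j => by fun_prop
    _ = _ := (tsum_congr hterm_j).symm

lemma zetaV_eq_tsum {s : ℕ} (hs : 1 < s) : zetaV s = ∑' j : ℕ, 1 / ((j : ℝ) + 1) ^ s := by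
  have hsum : Summable fun j : ℕ => 1 / ((j : ℝ) + 1) ^ s := by
    exact_mod_cast (summable_nat_add_iff 1).mpr (Real.summable_one_div_nat_pow.mpr hs)
  refine Tendsto.limUnder_eq (hsum.hasSum.tendsto_sum_nat.congr fun N => ?_)
  rw [Finset.sum_Ico_eq_sum_range]
  simp [add_comm]

theorem height_one_star_ones_two (m : ℕ) :
    heightOneStar m 0 = ((m : ℝ) + 1) * zetaV (m + 2) := by
  rw [heightOneStar_zero_eq_toReal_tsum, tsum_starHarmonic_div_sq,
    ENNReal.tsum_toReal_eq fun _ => ENNReal.ofReal_ne_top, zetaV_eq_tsum (by omega),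
    ← tsum_mul_left]
  refine tsum_congr fun j => ?_
  rw [ENNReal.toReal_ofReal (by positivity), mul_one_div]
end
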